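/- arXiv:2601.18992 — 9 statements merged into one kernel-verified Lean document; each statement's English description precedes it below -/
import Mathlib

section
/- The variance of the stratified mixture–mixture estimator is at most the variance of the i.i.d. mixture–mixture estimator: Var[MM^str(g)] ≤ Var[MM(g)]. More precisely, Var[MM(g)] = Var[MM^str(g)] + (1/N)·[ (1/N)·Σ_{j=1}^N a_j² − I² ], where a_j := ∫ (p_mix·g/q_mix)·q_j dx and I := ∫ p_mix·g dx (both sides of the variance inequality being allowed to be infinite). -/
open MeasureTheory ProbabilityTheory
open scoped ENNReal NNReal

/-!
Both estimators are `N⁻¹ · ∑ᵢ f(Zᵢ)` with `f = p_mix · g / q_mix` and independent `Zᵢ`. The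
`ℝ≥0∞`-valued variance of a sum of independent variables is the sum of the variances, infinite
ones included: if `V + W ∈ L²` with `V, W` independent then, by Fubini, `v + W ∈ L²` for some
constant `v`. Hence `Var[MM] = N⁻¹ · Var_{q_mix}(f)` and `Var[MM^str] = N⁻² · ∑ᵢ Var_{q_i}(f)`.
Since `q_mix` is the uniform mixture of the `q_i`, whose `f`-means are `a_i` while the
`q_mix`-mean is `I`, the law of total variance gives
`Var_{q_mix}(f) = N⁻¹ · ∑ᵢ Var_{q_i}(f) + (N⁻¹ ∑ᵢ a_i² - I²)`.
-/

namespace MeasureTheory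

variable {α ι : Type*} [MeasurableSpace α] {μ : Measure α}

lemma withDensity_ofReal_finsetSum {q : ι → α → ℝ} (hq : ∀ i, Measurable (q i))
    (hq0 : ∀ i x, 0 ≤ q i x) (w : ι → ℝ≥0) (s : Finset ι) :
    μ.withDensity (fun x => ENNReal.ofReal (∑ i ∈ s, w i * q i x))
      = ∑ i ∈ s, w i • μ.withDensity (fun x => ENNReal.ofReal (q i x)) := by
  ext t ht
  have hsum : ∀ x, ENNReal.ofReal (∑ i ∈ s, w i * q i x)
      = ∑ i ∈ s, (w i : ℝ≥0∞) * ENNReal.ofReal (q i x) := fun x => by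
    rw [ENNReal.ofReal_sum_of_nonneg fun i _ => mul_nonneg (w i).coe_nonneg (hq0 i x)]
    simp_rw [ENNReal.ofReal_mul NNReal.zero_le_coe, ENNReal.ofReal_coe_nnreal]
  simp_rw [withDensity_apply _ ht, hsum, Measure.coe_finsetSum, Finset.sum_apply,
    Measure.smul_apply, withDensity_apply _ ht, ENNReal.smul_def, smul_eq_mul]
  rw [lintegral_finsetSum _ fun i _ => by fun_prop]
  exact Finset.sum_congr rfl fun i _ => lintegral_const_mul _ (by fun_prop)

lemma integral_withDensity_ofReal {q : α → ℝ} (hq : Measurable q)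
    (hq0 : ∀ x, 0 ≤ q x) (f : α → ℝ) :
    ∫ x, f x ∂μ.withDensity (fun x => ENNReal.ofReal (q x)) = ∫ x, q x * f x ∂μ := by
  rw [integral_withDensity_eq_integral_toReal_smul (by fun_prop)
    (ae_of_all _ fun _ => ENNReal.ofReal_lt_top)]
  simp_rw [ENNReal.toReal_ofReal (hq0 _), smul_eq_mul]

lemma integral_mul_div_of_ae_eq_zero {q F : α → ℝ} (hF : ∀ᵐ x ∂μ, q x = 0 → F x = 0) :
    ∫ x, q x * (F x / q x) ∂μ = ∫ x, F x ∂μ := by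
  refine integral_congr_ae ?_
  filter_upwards [hF] with x hx
  by_cases h0 : q x = 0
  · simp [h0, hx h0]
  · exact mul_div_cancel₀ _ h0

end MeasureTheory

namespace ProbabilityTheory

section Independent

variable {Ω : Type*} [MeasurableSpace Ω] {μ : Measure Ω} [IsProbabilityMeasure μ]

lemma IndepFun.memLp_two_right_of_memLp_two_add {V W : Ω → ℝ} (hV : Measurable V)
    (hW : Measurable W) (hVW : IndepFun V W μ) (h : MemLp (V + W) 2 μ) :
    MemLp W 2 μ := by
  have hjoint : μ.map (fun ω => (V ω, W ω)) = (μ.map V).prod (μ.map W) :=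
    (indepFun_iff_map_prod_eq_prod_map_map hV.aemeasurable hW.aemeasurable).mp hVW
  have hsum : MemLp (fun p : ℝ × ℝ => p.1 + p.2) 2 ((μ.map V).prod (μ.map W)) := by
    rw [← hjoint, memLp_map_measure_iff (by fun_prop) (by fun_prop)]
    exact h
  have := Measure.isProbabilityMeasure_map (μ := μ) hV.aemeasurable
  obtain ⟨v, hv⟩ := ((memLp_two_iff_integrable_sq (by fun_prop)).mp hsum).prod_right_ae.exists
  have hshift : MemLp (fun w => v + w) 2 (μ.map W) :=
    (memLp_two_iff_integrable_sq (by fun_prop)).mpr hv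
  have hid : MemLp id 2 (μ.map W) := by
    convert hshift.sub (memLp_const v) using 1
    ext w
    simp
  exact (memLp_map_measure_iff (by fun_prop) hW.aemeasurable).mp hid

lemma iIndepFun.evariance_sum {ι : Type*} {Z : ι → Ω → ℝ} (hZ : ∀ i, Measurable (Z i))
    (h : iIndepFun Z μ) (s : Finset ι) :
    evariance (∑ i ∈ s, Z i) μ = ∑ i ∈ s, evariance (Z i) μ := by
  classical
  by_cases hL : ∀ i ∈ s, MemLp (Z i) 2 μ
  · rw [← (memLp_finsetSum' s hL).ofReal_variance_eq,
      IndepFun.variance_sum hL fun i _ j _ hij => h.indepFun hij,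
      ENNReal.ofReal_sum_of_nonneg fun i _ => variance_nonneg _ _]
    exact Finset.sum_congr rfl fun i hi => (hL i hi).ofReal_variance_eq
  · push Not at hL
    obtain ⟨j, hj, hjL⟩ := hL
    have hnot : ¬MemLp (∑ i ∈ s, Z i) 2 μ := by
      rw [← Finset.sum_erase_add _ _ hj]
      exact fun hsum => hjL <| (h.indepFun_finsetSum_of_notMem hZ
        (Finset.notMem_erase j s)).memLp_two_right_of_memLp_two_add
        (by fun_prop) (hZ j) hsum
    rw [evariance_eq_top (by fun_prop) hnot, eq_comm, ENNReal.sum_eq_top]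
    exact ⟨j, hj, evariance_eq_top (hZ j).aestronglyMeasurable hjL⟩

end Independent

variable {α Ω ι : Type*} [MeasurableSpace α] [MeasurableSpace Ω]

lemma evariance_map {μ : Measure Ω} {f : α → ℝ} {Y : Ω → α} (hf : Measurable f)
    (hY : Measurable Y) : evariance f (μ.map Y) = evariance (f ∘ Y) μ := by
  rw [evariance, evariance, lintegral_map (by fun_prop) hY,
    integral_map hY.aemeasurable hf.aestronglyMeasurable]
  rfl

lemma iIndepFun.evariance_const_mul_sum_comp {μ : Measure Ω} [IsProbabilityMeasure μ]
    {Z : ι → Ω → α} (hZ : ∀ i, Measurable (Z i)) (h : iIndepFun Z μ) {f : α → ℝ}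
    (hf : Measurable f) (c : ℝ) (s : Finset ι) :
    evariance (fun ω => c * ∑ i ∈ s, f (Z i ω)) μ
      = ENNReal.ofReal (c ^ 2) * ∑ i ∈ s, evariance f (μ.map (Z i)) := by
  rw [evariance_mul, show (fun ω => ∑ i ∈ s, f (Z i ω)) = ∑ i ∈ s, f ∘ Z i by ext; simp,
    (h.comp (fun _ => f) fun _ => hf).evariance_sum (fun i => hf.comp (hZ i))]
  simp_rw [evariance_map hf (hZ _)]

lemma iIndepFun.evariance_inv_mul_sum_comp [IsProbabilityMeasure μ] {N : ℕ} (hN : N ≠ 0)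
    {Z : Fin N → Ω → α} (hZ : ∀ i, Measurable (Z i)) (h : iIndepFun Z μ) {f : α → ℝ}
    (hf : Measurable f) :
    evariance (fun ω => (N : ℝ)⁻¹ * ∑ i, f (Z i ω)) μ
      = (N : ℝ≥0∞)⁻¹ * ((N : ℝ≥0∞)⁻¹ * ∑ i, evariance f (μ.map (Z i))) := by
  rw [h.evariance_const_mul_sum_comp hZ hf, ENNReal.ofReal_pow (by positivity),
    ENNReal.ofReal_inv_of_pos (by positivity), ENNReal.ofReal_natCast, sq, mul_assoc]

lemma lintegral_enorm_sub_const_sq_eq_evariance_add {ρ : Measure α} [IsProbabilityMeasure ρ] {f : α → ℝ}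
    (hf : AEStronglyMeasurable f ρ) (c : ℝ) :
    ∫⁻ x, ‖f x - c‖ₑ ^ 2 ∂ρ = evariance f ρ + ENNReal.ofReal ((∫ x, f x ∂ρ - c) ^ 2) := by
  by_cases hL : MemLp f 2 ρ
  · have hLc : MemLp (fun x => f x - c) 2 ρ := hL.sub (memLp_const c)
    have hsq : ∫ x, (f x - c) ^ 2 ∂ρ = variance f ρ + (∫ x, f x ∂ρ - c) ^ 2 := by
      rw [← variance_sub_const hf c, variance_eq_sub hLc,
        integral_sub (hL.integrable one_le_two) (integrable_const c)]
      simp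
    rw [← hL.ofReal_variance_eq, ← ENNReal.ofReal_add (variance_nonneg _ _) (sq_nonneg _), ← hsq,
      ofReal_integral_eq_lintegral_ofReal hLc.integrable_sq (ae_of_all _ fun _ => sq_nonneg _)]
    simp_rw [← enorm_pow, Real.enorm_of_nonneg (sq_nonneg _)]
  · have hLc : ¬MemLp (fun x => f x - c) 2 ρ := fun h => hL <| by
      convert h.add (memLp_const c) using 1
      ext x
      simp
    have htop := evariance_eq_top (by fun_prop) hLc
    rw [evariance_def' (by fun_prop), ENNReal.sub_eq_top_iff] at htop
    rw [htop.1, evariance_eq_top hf hL, top_add]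

variable {ν : ι → Measure α} [∀ i, IsProbabilityMeasure (ν i)] {w : ι → ℝ≥0} {s : Finset ι}

/-- The law of total variance for a finite mixture. -/
lemma evariance_finsetSum_smul_measure {f : α → ℝ} (hf : Measurable f)
    (hw : ∑ i ∈ s, w i = 1) :
    evariance f (∑ i ∈ s, w i • ν i) = ∑ i ∈ s, w i * evariance f (ν i)
      + ENNReal.ofReal (∑ i ∈ s, w i * (∫ x, f x ∂ν i) ^ 2
        - (∫ x, f x ∂(∑ i ∈ s, w i • ν i)) ^ 2) := by
  set m := ∫ x, f x ∂(∑ i ∈ s, w i • ν i) with hm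
  have hsplit : evariance f (∑ i ∈ s, w i • ν i) = ∑ i ∈ s, w i * evariance f (ν i)
      + ∑ i ∈ s, w i * ENNReal.ofReal ((∫ x, f x ∂ν i - m) ^ 2) := by
    rw [evariance, lintegral_finsetSum_measure, ← Finset.sum_add_distrib]
    refine Finset.sum_congr rfl fun i _ => ?_
    rw [lintegral_smul_measure, lintegral_enorm_sub_const_sq_eq_evariance_add hf.aestronglyMeasurable,
      ENNReal.smul_def, smul_eq_mul, mul_add]
  by_cases hint : Integrable f (∑ i ∈ s, w i • ν i)
  · have hmean : m = ∑ i ∈ s, w i * ∫ x, f x ∂ν i := by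
      rw [hm, integral_finsetSum_measure (integrable_finsetSum_measure.mp hint)]
      simp [integral_smul_nnreal_measure, NNReal.smul_def]
    have hspread : ∑ i ∈ s, (w i : ℝ) * (∫ x, f x ∂ν i - m) ^ 2
        = ∑ i ∈ s, w i * (∫ x, f x ∂ν i) ^ 2 - m ^ 2 := by
      have hw' : ∑ i ∈ s, (w i : ℝ) = 1 := by exact_mod_cast hw
      have hexpand : ∀ i ∈ s, (w i : ℝ) * (∫ x, f x ∂ν i - m) ^ 2
          = w i * (∫ x, f x ∂ν i) ^ 2 - 2 * m * (w i * ∫ x, f x ∂ν i) + m ^ 2 * w i :=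
        fun i _ => by ring
      rw [Finset.sum_congr rfl hexpand, Finset.sum_add_distrib, Finset.sum_sub_distrib,
        ← Finset.mul_sum, ← Finset.mul_sum, hw', ← hmean]
      ring
    rw [hsplit, ← hspread, ENNReal.ofReal_sum_of_nonneg fun i _ => by positivity]
    simp_rw [ENNReal.ofReal_mul NNReal.zero_le_coe, ENNReal.ofReal_coe_nnreal]
  · have htop : evariance f (∑ i ∈ s, w i • ν i) = ∞ :=
      evariance_eq_top hf.aestronglyMeasurable fun hL => hint (hL.integrable one_le_two)
    have hspread_ne_top : ∑ i ∈ s, w i * ENNReal.ofReal ((∫ x, f x ∂ν i - m) ^ 2) ≠ ∞ :=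
      ENNReal.sum_ne_top.mpr fun i _ => ENNReal.mul_ne_top ENNReal.coe_ne_top ENNReal.ofReal_ne_top
    have hwithin : ∑ i ∈ s, w i * evariance f (ν i) = ∞ := by
      rw [htop, eq_comm, ENNReal.add_eq_top] at hsplit
      exact hsplit.resolve_right hspread_ne_top
    rw [htop, hwithin, top_add]

lemma evariance_sum_inv_card_smul_measure [Fintype ι] [Nonempty ι] {f : α → ℝ}
    (hf : Measurable f) :
    evariance f (∑ i, (Fintype.card ι : ℝ≥0)⁻¹ • ν i)
      = (Fintype.card ι : ℝ≥0∞)⁻¹ * ∑ i, evariance f (ν i)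
        + ENNReal.ofReal ((Fintype.card ι : ℝ)⁻¹ * ∑ i, (∫ x, f x ∂ν i) ^ 2
          - (∫ x, f x ∂(∑ i, (Fintype.card ι : ℝ≥0)⁻¹ • ν i)) ^ 2) := by
  have hcard : (Fintype.card ι : ℝ≥0) ≠ 0 := by simp
  rw [evariance_finsetSum_smul_measure hf (by simp [Finset.card_univ, hcard])]
  simp only [ENNReal.coe_inv hcard, ENNReal.coe_natCast, NNReal.coe_inv, NNReal.coe_natCast,
    ← Finset.mul_sum]

end ProbabilityTheory

theorem variance_MMstr_le_variance_MM_general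
    {d N : ℕ} (hN : 1 ≤ N)
    {Ω : Type} [MeasurableSpace Ω] (μ : Measure Ω) [IsProbabilityMeasure μ]
    (p q : Fin N → (Fin d → ℝ) → ℝ)
    (hq0 : ∀ i x, 0 ≤ q i x)
    (hpm : ∀ i, Measurable (p i)) (hqm : ∀ i, Measurable (q i))
    (pmix qmix : (Fin d → ℝ) → ℝ)
    (hpmix : ∀ x, pmix x = (N : ℝ)⁻¹ * ∑ i, p i x)
    (hqmix : ∀ x, qmix x = (N : ℝ)⁻¹ * ∑ i, q i x)
    -- absolute continuity p_mix ≪ q_i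
    (habs : ∀ i, ∀ᵐ x : Fin d → ℝ ∂volume, q i x = 0 → pmix x = 0)
    (g : (Fin d → ℝ) → ℝ) (hgm : Measurable g)
    -- X_i independent with density q_i; Y_i i.i.d. with density q_mix
    (X Y : Fin N → Ω → (Fin d → ℝ))
    (hXm : ∀ i, Measurable (X i)) (hYm : ∀ i, Measurable (Y i))
    (hXindep : iIndepFun X μ)
    (hYindep : iIndepFun Y μ)
    (hXlaw : ∀ i, Measure.map (X i) μ =
      volume.withDensity (fun x => ENNReal.ofReal (q i x)))
    (hYlaw : ∀ i, Measure.map (Y i) μ =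
      volume.withDensity (fun x => ENNReal.ofReal (qmix x)))
    (I : ℝ) (hI : I = ∫ x, pmix x * g x)
    (a : Fin N → ℝ) (ha : ∀ j, a j = ∫ x, (pmix x * g x / qmix x) * q j x) :
    -- Var[MM(g)] = Var[MM^str(g)] + (1/N)·[(1/N)·Σ_j a_j² − I²]
    evariance (fun ω => (N : ℝ)⁻¹ * ∑ i, (pmix (Y i ω) / qmix (Y i ω)) * g (Y i ω)) μ
      = evariance (fun ω => (N : ℝ)⁻¹ * ∑ i, (pmix (X i ω) / qmix (X i ω)) * g (X i ω)) μ
        + ENNReal.ofReal ((N : ℝ)⁻¹ * ((N : ℝ)⁻¹ * ∑ j, (a j) ^ 2 - I ^ 2)) ∧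
    -- Var[MM^str(g)] ≤ Var[MM(g)]
    evariance (fun ω => (N : ℝ)⁻¹ * ∑ i, (pmix (X i ω) / qmix (X i ω)) * g (X i ω)) μ
      ≤ evariance (fun ω => (N : ℝ)⁻¹ * ∑ i, (pmix (Y i ω) / qmix (Y i ω)) * g (Y i ω)) μ := by
  set f : (Fin d → ℝ) → ℝ := fun x => pmix x * g x / qmix x
  have hsummand : ∀ x, pmix x / qmix x * g x = f x := fun x => div_mul_eq_mul_div _ _ _
  simp only [hsummand]
  set ν : Fin N → Measure (Fin d → ℝ) := fun i =>
    volume.withDensity fun x => ENNReal.ofReal (q i x)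
  set νmix := volume.withDensity fun x => ENNReal.ofReal (qmix x)
  have hqmix0 : ∀ x, 0 ≤ qmix x := fun x => by
    rw [hqmix]; exact mul_nonneg (by positivity) (Finset.sum_nonneg fun i _ => hq0 i x)
  have hpmixm : Measurable pmix := by rw [show pmix = _ from funext hpmix]; fun_prop
  have hqmixm : Measurable qmix := by rw [show qmix = _ from funext hqmix]; fun_prop
  have hfm : Measurable f := by fun_prop
  have hXlaw' : ∀ i, μ.map (X i) = ν i := hXlaw
  have : ∀ i, IsProbabilityMeasure (ν i) := fun i =>
    hXlaw' i ▸ Measure.isProbabilityMeasure_map (hXm i).aemeasurable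
  have : Nonempty (Fin N) := ⟨⟨0, hN⟩⟩
  have hmix : νmix = ∑ i, (Fintype.card (Fin N) : ℝ≥0)⁻¹ • ν i := by
    rw [← withDensity_ofReal_finsetSum hqm hq0]
    simp only [νmix, hqmix, Finset.mul_sum, Fintype.card_fin, NNReal.coe_inv, NNReal.coe_natCast]
  have hmeanX : ∀ i, ∫ x, f x ∂ν i = a i := fun i => by
    rw [integral_withDensity_ofReal (hqm i) (hq0 i), ha i]
    exact integral_congr_ae (ae_of_all _ fun x => mul_comm _ _)
  have hq_zero : ∀ x, qmix x = 0 → q ⟨0, hN⟩ x = 0 := fun x hx => by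
    rw [hqmix, mul_eq_zero, inv_eq_zero, Nat.cast_eq_zero,
      Finset.sum_eq_zero_iff_of_nonneg fun i _ => hq0 i x] at hx
    exact hx.resolve_left (by omega) _ (Finset.mem_univ _)
  have hmeanY : ∫ x, f x ∂νmix = I := by
    rw [integral_withDensity_ofReal hqmixm hqmix0, hI]
    refine integral_mul_div_of_ae_eq_zero ?_
    filter_upwards [habs ⟨0, hN⟩] with x hx h0
    rw [hx (hq_zero x h0), zero_mul]
  have htotal := evariance_sum_inv_card_smul_measure (ν := ν) hfm
  rw [← hmix, hmeanY, Fintype.card_fin] at htotal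
  simp only [hmeanX] at htotal
  have hN0 : N ≠ 0 := by omega
  have hNinv : (N : ℝ≥0∞)⁻¹ * N = 1 := ENNReal.inv_mul_cancel (by simpa) (by simp)
  have main : evariance (fun ω => (N : ℝ)⁻¹ * ∑ i, f (Y i ω)) μ
      = evariance (fun ω => (N : ℝ)⁻¹ * ∑ i, f (X i ω)) μ
        + ENNReal.ofReal ((N : ℝ)⁻¹ * ((N : ℝ)⁻¹ * ∑ j, (a j) ^ 2 - I ^ 2)) := by
    rw [hYindep.evariance_inv_mul_sum_comp hN0 hYm hfm,
      hXindep.evariance_inv_mul_sum_comp hN0 hXm hfm]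
    simp_rw [hYlaw, hXlaw']
    rw [Finset.sum_const, Finset.card_univ, Fintype.card_fin, nsmul_eq_mul,
      ← mul_assoc _ (N : ℝ≥0∞), hNinv, one_mul, htotal, mul_add, ENNReal.ofReal_mul (by positivity),
      ENNReal.ofReal_inv_of_pos (by positivity), ENNReal.ofReal_natCast]
  exact ⟨main, main ▸ le_self_add⟩

/-- `Var[MM^str(g)] ≤ Var[MM(g)]`; more precisely
`Var[MM(g)] = Var[MM^str(g)] + (1/N)·[(1/N)·Σ_j a_j² − I²]` where
`a_j = ∫ (p_mix·g/q_mix)·q_j` and `I = ∫ p_mix·g` (variances taken in `[0,∞]`). -/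
theorem variance_MMstr_le_variance_MM
    {d N : ℕ} (hN : 1 ≤ N)
    {Ω : Type} [MeasurableSpace Ω] (μ : Measure Ω) [IsProbabilityMeasure μ]
    (p q : Fin N → (Fin d → ℝ) → ℝ)
    (hp0 : ∀ i x, 0 ≤ p i x) (hq0 : ∀ i x, 0 ≤ q i x)
    (hpm : ∀ i, Measurable (p i)) (hqm : ∀ i, Measurable (q i))
    (hp1 : ∀ i, ∫ x, p i x = 1) (hq1 : ∀ i, ∫ x, q i x = 1)
    (pmix qmix : (Fin d → ℝ) → ℝ)
    (hpmix : ∀ x, pmix x = (N : ℝ)⁻¹ * ∑ i, p i x)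
    (hqmix : ∀ x, qmix x = (N : ℝ)⁻¹ * ∑ i, q i x)
    -- absolute continuity p_mix ≪ q_i
    (habs : ∀ i, ∀ᵐ x : Fin d → ℝ ∂volume, q i x = 0 → pmix x = 0)
    (g : (Fin d → ℝ) → ℝ) (hgm : Measurable g)
    -- ∫ p_mix · g² dx < ∞
    (hgL2 : Integrable (fun x => pmix x * (g x) ^ 2) volume)
    -- X_i independent with density q_i; Y_i i.i.d. with density q_mix
    (X Y : Fin N → Ω → (Fin d → ℝ))
    (hXm : ∀ i, Measurable (X i)) (hYm : ∀ i, Measurable (Y i))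
    (hXindep : iIndepFun X μ)
    (hYindep : iIndepFun Y μ)
    (hXlaw : ∀ i, Measure.map (X i) μ =
      volume.withDensity (fun x => ENNReal.ofReal (q i x)))
    (hYlaw : ∀ i, Measure.map (Y i) μ =
      volume.withDensity (fun x => ENNReal.ofReal (qmix x)))
    (I : ℝ) (hI : I = ∫ x, pmix x * g x)
    (a : Fin N → ℝ) (ha : ∀ j, a j = ∫ x, (pmix x * g x / qmix x) * q j x) :
    -- Var[MM(g)] = Var[MM^str(g)] + (1/N)·[(1/N)·Σ_j a_j² − I²]
    evariance (fun ω => (N : ℝ)⁻¹ * ∑ i, (pmix (Y i ω) / qmix (Y i ω)) * g (Y i ω)) μ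
      = evariance (fun ω => (N : ℝ)⁻¹ * ∑ i, (pmix (X i ω) / qmix (X i ω)) * g (X i ω)) μ
        + ENNReal.ofReal ((N : ℝ)⁻¹ * ((N : ℝ)⁻¹ * ∑ j, (a j) ^ 2 - I ^ 2)) ∧
    -- Var[MM^str(g)] ≤ Var[MM(g)]
    evariance (fun ω => (N : ℝ)⁻¹ * ∑ i, (pmix (X i ω) / qmix (X i ω)) * g (X i ω)) μ
      ≤ evariance (fun ω => (N : ℝ)⁻¹ * ∑ i, (pmix (Y i ω) / qmix (Y i ω)) * g (Y i ω)) μ :=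
  variance_MMstr_le_variance_MM_general hN μ p q hq0 hpm hqm pmix qmix hpmix hqmix habs g hgm X Y
    hXm hYm hXindep hYindep hXlaw hYlaw I hI a ha
end

section
/- The variance of the mixture-target/mixture-proposal estimator is at most that of the mixture-target/individual-proposal estimator: Var[MM(g)] ≤ Var[MI(g)] (both sides allowed to be infinite). Equivalently, since both estimators are unbiased for I = ∫ p_mix·g dx, one has N·∫ (p_mix·g/q_mix)²·q_mix dx − N·I² ≤ Σ_{i=1}^N ( ∫ (p_mix·g/q_i)²·q_i dx − I² ). -/
/-!
Both estimators are averages of `N` independent importance-sampling terms with the common mean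
`I = ∫ p_mix g`, so each variance is `N⁻²` times the sum of the variances of the terms, and the
term with proposal density `q` has variance `∫ (p_mix g - I q)² / q`. Pointwise, Sedrakyan's form
of Cauchy–Schwarz applied to `f_i = p_mix g - I q_i` gives
`N (p_mix g - I q_mix)² / q_mix = (∑ f_i)² / ∑ q_i ≤ ∑ f_i² / q_i`, and integrating this gives
the claim. Working with `evariance` in `[0, ∞]` needs one more fact: a sum of independent random
variables has infinite variance as soon as one summand does.
-/

open MeasureTheory ProbabilityTheory Finset
open scoped ENNReal

theorem Finset.sq_sum_div_le_sum_sq_div_of_imp {ι R : Type*} [Semifield R] [LinearOrder R]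
    [IsStrictOrderedRing R] [ExistsAddOfLE R] (s : Finset ι) (f : ι → R) {g : ι → R}
    (hg : ∀ i ∈ s, 0 ≤ g i) (hfg : ∀ i ∈ s, g i = 0 → f i = 0) :
    (∑ i ∈ s, f i) ^ 2 / ∑ i ∈ s, g i ≤ ∑ i ∈ s, f i ^ 2 / g i := by
  have hpos : ∀ i ∈ s, g i ≠ 0 → 0 < g i := fun i hi h => (hg i hi).lt_of_ne' h
  rw [← sum_filter_of_ne (p := fun i => 0 < g i) fun i hi h => hpos i hi (mt (hfg i hi) h),
    ← sum_filter_of_ne (p := fun i => 0 < g i) hpos,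
    ← sum_filter_of_ne (p := fun i => 0 < g i)
      fun i hi h => hpos i hi (by rintro h0; simp [h0] at h)]
  exact sq_sum_div_le_sum_sq_div _ f fun i hi => (mem_filter.1 hi).2

theorem card_mul_sq_sub_div_mean_le {ι : Type*} [Fintype ι] (q : ι → ℝ) (hq : ∀ i, 0 ≤ q i)
    (a c : ℝ) (ha : ∀ i, q i = 0 → a = 0) :
    Fintype.card ι * ((a - c * ((Fintype.card ι : ℝ)⁻¹ * ∑ i, q i)) ^ 2
      / ((Fintype.card ι : ℝ)⁻¹ * ∑ i, q i)) ≤ ∑ i, (a - c * q i) ^ 2 / q i := by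
  rcases isEmpty_or_nonempty ι with hι | hι
  · simp
  have hn : (Fintype.card ι : ℝ) ≠ 0 := by positivity
  calc _ = (∑ i, (a - c * q i)) ^ 2 / ∑ i, q i := by
        simp only [sum_sub_distrib, sum_const, card_univ, nsmul_eq_mul, ← mul_sum]
        field_simp
    _ ≤ _ := sq_sum_div_le_sum_sq_div_of_imp _ _ (fun i _ => hq i) fun i _ h => by simp [h, ha i h]

theorem card_mul_lintegral_le_sum_lintegral {ι E : Type*} [Fintype ι] [MeasurableSpace E]
    {ν : Measure E} {q : ι → E → ℝ} (hq0 : ∀ i x, 0 ≤ q i x) (hqm : ∀ i, Measurable (q i))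
    {a : E → ℝ} (ham : Measurable a) (c : ℝ) (ha : ∀ᵐ x ∂ν, ∀ i, q i x = 0 → a x = 0) :
    Fintype.card ι * ∫⁻ x, ENNReal.ofReal ((a x - c * ((Fintype.card ι : ℝ)⁻¹ * ∑ i, q i x)) ^ 2
      / ((Fintype.card ι : ℝ)⁻¹ * ∑ i, q i x)) ∂ν
      ≤ ∑ i, ∫⁻ x, ENNReal.ofReal ((a x - c * q i x) ^ 2 / q i x) ∂ν := by
  rw [← lintegral_const_mul' _ _ (ENNReal.natCast_ne_top _),
    ← lintegral_finsetSum _ fun i _ => by fun_prop]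
  refine lintegral_mono_ae (ha.mono fun x hx => ?_)
  rw [← ENNReal.ofReal_natCast, ← ENNReal.ofReal_mul (Nat.cast_nonneg _),
    ← ENNReal.ofReal_sum_of_nonneg fun i _ => div_nonneg (sq_nonneg _) (hq0 i x)]
  exact ENNReal.ofReal_le_ofReal (card_mul_sq_sub_div_mean_le _ (hq0 · x) _ c hx)

-- Also for `q = 0`, where both sides are `0` because `x / 0 = 0`.
theorem mul_sq_div_sub_eq (a q c : ℝ) : q * (a / q - c) ^ 2 = (a - c * q) ^ 2 / q := by
  rcases eq_or_ne q 0 with rfl | hq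
  · simp
  · field_simp

section ImportanceSampling

variable {Ω E : Type*} [MeasurableSpace Ω] [MeasurableSpace E] {μ : Measure Ω} {ν : Measure E}
  {q : E → ℝ} {X : Ω → E}

theorem integral_comp_of_map_eq_withDensity (hq0 : ∀ x, 0 ≤ q x) (hqm : Measurable q)
    (hXm : Measurable X) (hX : μ.map X = ν.withDensity fun x => ENNReal.ofReal (q x))
    {F : E → ℝ} (hFm : Measurable F) :
    ∫ ω, F (X ω) ∂μ = ∫ x, q x * F x ∂ν := by
  rw [← integral_map hXm.aemeasurable hFm.aestronglyMeasurable, hX,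
    integral_withDensity_eq_integral_toReal_smul hqm.ennreal_ofReal
      (ae_of_all _ fun _ => ENNReal.ofReal_lt_top)]
  simp [ENNReal.toReal_ofReal (hq0 _)]

theorem lintegral_comp_of_map_eq_withDensity (hqm : Measurable q)
    (hXm : Measurable X) (hX : μ.map X = ν.withDensity fun x => ENNReal.ofReal (q x))
    {G : E → ℝ≥0∞} (hGm : Measurable G) :
    ∫⁻ ω, G (X ω) ∂μ = ∫⁻ x, ENNReal.ofReal (q x) * G x ∂ν := by
  rw [← lintegral_map hGm hXm, hX, lintegral_withDensity_eq_lintegral_mul _ hqm.ennreal_ofReal hGm]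
  rfl

theorem evariance_importance_weighted (hq0 : ∀ x, 0 ≤ q x) (hqm : Measurable q) {p g : E → ℝ}
    (hpm : Measurable p) (hgm : Measurable g) (hpq : ∀ᵐ x ∂ν, q x = 0 → p x = 0)
    (hXm : Measurable X) (hX : μ.map X = ν.withDensity fun x => ENNReal.ofReal (q x)) :
    evariance (fun ω => p (X ω) / q (X ω) * g (X ω)) μ
      = ∫⁻ x, ENNReal.ofReal ((p x * g x - (∫ y, p y * g y ∂ν) * q x) ^ 2 / q x) ∂ν := by
  have hmean : ∫ ω, p (X ω) / q (X ω) * g (X ω) ∂μ = ∫ y, p y * g y ∂ν := by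
    rw [integral_comp_of_map_eq_withDensity hq0 hqm hXm hX (F := fun x => p x / q x * g x)
      (by fun_prop)]
    refine integral_congr_ae (hpq.mono fun x hx => ?_)
    show q x * (p x / q x * g x) = p x * g x
    rw [← mul_assoc, mul_div_cancel_of_imp' hx]
  rw [evariance_eq_lintegral_ofReal, hmean,
    lintegral_comp_of_map_eq_withDensity hqm hXm hX
      (G := fun x => ENNReal.ofReal ((p x / q x * g x - ∫ y, p y * g y ∂ν) ^ 2)) (by fun_prop)]
  congr with x
  rw [← ENNReal.ofReal_mul (hq0 x), ← mul_sq_div_sub_eq, div_mul_eq_mul_div]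

end ImportanceSampling

section IndependentSum

variable {Ω : Type*} [MeasurableSpace Ω] {μ : Measure Ω} [IsProbabilityMeasure μ]

theorem ProbabilityTheory.IndepFun.memLp_two_left_of_add {A B : Ω → ℝ} (hA : Measurable A)
    (hB : Measurable B) (hAB : IndepFun A B μ) (h : MemLp (A + B) 2 μ) : MemLp A 2 μ := by
  have hprod : μ.map (fun ω => (A ω, B ω)) = (μ.map A).prod (μ.map B) :=
    (indepFun_iff_map_prod_eq_prod_map_map hA.aemeasurable hB.aemeasurable).mp hAB
  have hint : Integrable (fun z : ℝ × ℝ => (z.1 + z.2) ^ 2) ((μ.map A).prod (μ.map B)) := by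
    rw [← hprod, integrable_map_measure (by fun_prop) (by fun_prop)]
    exact (memLp_two_iff_integrable_sq h.1).1 h
  have := Measure.isProbabilityMeasure_map (μ := μ) hB.aemeasurable
  obtain ⟨y, hy⟩ := hint.prod_left_ae.exists
  have hshift : MemLp (fun x => x + y) 2 (μ.map A) :=
    (memLp_two_iff_integrable_sq (by fun_prop)).2 hy
  have hid : MemLp id 2 (μ.map A) := by
    convert hshift.sub (memLp_const y) using 1
    ext x
    simp
  exact (memLp_map_measure_iff aestronglyMeasurable_id hA.aemeasurable).1 hid

theorem ProbabilityTheory.iIndepFun.evariance_sum_s2 {ι : Type*} [Fintype ι] {Z : ι → Ω → ℝ}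
    (hZm : ∀ i, Measurable (Z i)) (hZ : iIndepFun Z μ) :
    evariance (fun ω => ∑ i, Z i ω) μ = ∑ i, evariance (Z i) μ := by
  classical
  by_cases hL2 : ∀ i, MemLp (Z i) 2 μ
  · rw [← sum_fn, ← (memLp_finsetSum' _ fun i _ => hL2 i).ofReal_variance_eq,
      IndepFun.variance_sum (fun i _ => hL2 i) fun i _ j _ hij => hZ.indepFun hij,
      ENNReal.ofReal_sum_of_nonneg fun i _ => variance_nonneg _ _]
    exact sum_congr rfl fun i _ => (hL2 i).ofReal_variance_eq
  push Not at hL2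
  obtain ⟨i, hi⟩ := hL2
  rw [ENNReal.sum_eq_top.2 ⟨i, mem_univ i, evariance_eq_top (hZm i).aestronglyMeasurable hi⟩,
    evariance_eq_top (by fun_prop)]
  intro hsum
  refine hi ((hZ.indepFun_finsetSum_of_notMem hZm (notMem_erase i univ)).symm.memLp_two_left_of_add
    (hZm i) (by fun_prop) ?_)
  rwa [add_sum_erase _ _ (mem_univ i), sum_fn]

end IndependentSum

theorem variance_MM_le_variance_MI_general
    {d N : ℕ}
    {Ω : Type} [MeasurableSpace Ω] (μ : Measure Ω) [IsProbabilityMeasure μ]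
    (p q : Fin N → (Fin d → ℝ) → ℝ)
    (hq0 : ∀ i x, 0 ≤ q i x)
    (hpm : ∀ i, Measurable (p i)) (hqm : ∀ i, Measurable (q i))
    (pmix qmix : (Fin d → ℝ) → ℝ)
    (hpmix : ∀ x, pmix x = (N : ℝ)⁻¹ * ∑ i, p i x)
    (hqmix : ∀ x, qmix x = (N : ℝ)⁻¹ * ∑ i, q i x)
    -- absolute continuity p_mix ≪ q_i
    (habs : ∀ i, ∀ᵐ x : Fin d → ℝ ∂volume, q i x = 0 → pmix x = 0)
    (g : (Fin d → ℝ) → ℝ) (hgm : Measurable g)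
    -- X_i independent with density q_i; Y_i i.i.d. with density q_mix
    (X Y : Fin N → Ω → (Fin d → ℝ))
    (hXm : ∀ i, Measurable (X i)) (hYm : ∀ i, Measurable (Y i))
    (hXindep : iIndepFun X μ)
    (hYindep : iIndepFun Y μ)
    (hXlaw : ∀ i, Measure.map (X i) μ =
      volume.withDensity (fun x => ENNReal.ofReal (q i x)))
    (hYlaw : ∀ i, Measure.map (Y i) μ =
      volume.withDensity (fun x => ENNReal.ofReal (qmix x))) :
    -- Var[MM(g)] ≤ Var[MI(g)]
    evariance (fun ω => (N : ℝ)⁻¹ * ∑ i, (pmix (Y i ω) / qmix (Y i ω)) * g (Y i ω)) μ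
      ≤ evariance (fun ω => (N : ℝ)⁻¹ * ∑ i, (pmix (X i ω) / q i (X i ω)) * g (X i ω)) μ := by
  have hpmix_meas : Measurable pmix := by rw [funext hpmix]; fun_prop
  have hqmix_meas : Measurable qmix := by rw [funext hqmix]; fun_prop
  have hqmix0 (x) : 0 ≤ qmix x := by
    rw [hqmix]; exact mul_nonneg (by positivity) (sum_nonneg fun i _ => hq0 i x)
  have hqmix_abs (i : Fin N) : ∀ᵐ x ∂volume, qmix x = 0 → pmix x = 0 := by
    filter_upwards [habs i] with x hx hx0
    refine hx ((sum_eq_zero_iff_of_nonneg fun j _ => hq0 j x).1 ?_ i (mem_univ i))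
    simpa [hqmix, i.pos.ne'] using hx0
  have hindX : iIndepFun (fun i ω => pmix (X i ω) / q i (X i ω) * g (X i ω)) μ :=
    hXindep.comp (fun i x => pmix x / q i x * g x) fun i => by fun_prop
  have hindY : iIndepFun (fun i ω => pmix (Y i ω) / qmix (Y i ω) * g (Y i ω)) μ :=
    hYindep.comp (fun _ x => pmix x / qmix x * g x) fun _ => by fun_prop
  rw [evariance_mul, evariance_mul, hindX.evariance_sum_s2 fun i => by fun_prop,
    hindY.evariance_sum_s2 fun i => by fun_prop]
  gcongr _ * ?_
  have hvarX := fun i =>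
    evariance_importance_weighted (hq0 i) (hqm i) hpmix_meas hgm (habs i) (hXm i) (hXlaw i)
  have hvarY := fun i =>
    evariance_importance_weighted hqmix0 hqmix_meas hpmix_meas hgm (hqmix_abs i) (hYm i) (hYlaw i)
  simp only [hvarX, hvarY, sum_const, card_univ, nsmul_eq_mul]
  simpa [hqmix] using card_mul_lintegral_le_sum_lintegral hq0 hqm (hpmix_meas.mul hgm)
    (∫ x, pmix x * g x) (by filter_upwards [ae_all_iff.2 habs] with x hx i h using by simp [hx i h])

/-- `Var[MM(g)] ≤ Var[MI(g)]` (both sides allowed to be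
infinite, i.e. taken as `evariance` with values in `[0,∞]`). -/
theorem variance_MM_le_variance_MI
    {d N : ℕ} (hN : 1 ≤ N)
    {Ω : Type} [MeasurableSpace Ω] (μ : Measure Ω) [IsProbabilityMeasure μ]
    (p q : Fin N → (Fin d → ℝ) → ℝ)
    (hp0 : ∀ i x, 0 ≤ p i x) (hq0 : ∀ i x, 0 ≤ q i x)
    (hpm : ∀ i, Measurable (p i)) (hqm : ∀ i, Measurable (q i))
    (hp1 : ∀ i, ∫ x, p i x = 1) (hq1 : ∀ i, ∫ x, q i x = 1)
    (pmix qmix : (Fin d → ℝ) → ℝ)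
    (hpmix : ∀ x, pmix x = (N : ℝ)⁻¹ * ∑ i, p i x)
    (hqmix : ∀ x, qmix x = (N : ℝ)⁻¹ * ∑ i, q i x)
    -- absolute continuity p_mix ≪ q_i
    (habs : ∀ i, ∀ᵐ x : Fin d → ℝ ∂volume, q i x = 0 → pmix x = 0)
    (g : (Fin d → ℝ) → ℝ) (hgm : Measurable g)
    -- ∫ p_mix · g² dx < ∞
    (hgL2 : Integrable (fun x => pmix x * (g x) ^ 2) volume)
    -- X_i independent with density q_i; Y_i i.i.d. with density q_mix
    (X Y : Fin N → Ω → (Fin d → ℝ))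
    (hXm : ∀ i, Measurable (X i)) (hYm : ∀ i, Measurable (Y i))
    (hXindep : iIndepFun X μ)
    (hYindep : iIndepFun Y μ)
    (hXlaw : ∀ i, Measure.map (X i) μ =
      volume.withDensity (fun x => ENNReal.ofReal (q i x)))
    (hYlaw : ∀ i, Measure.map (Y i) μ =
      volume.withDensity (fun x => ENNReal.ofReal (qmix x))) :
    -- Var[MM(g)] ≤ Var[MI(g)]
    evariance (fun ω => (N : ℝ)⁻¹ * ∑ i, (pmix (Y i ω) / qmix (Y i ω)) * g (Y i ω)) μ
      ≤ evariance (fun ω => (N : ℝ)⁻¹ * ∑ i, (pmix (X i ω) / q i (X i ω)) * g (X i ω)) μ :=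
  variance_MM_le_variance_MI_general μ p q hq0 hpm hqm pmix qmix hpmix hqmix habs g hgm X Y hXm hYm
    hXindep hYindep hXlaw hYlaw
end

section
/- On the two-point space X = {0,1} with N = 2 components, take g ≡ 1 and the probability mass functions p_1 = (1/10, 9/10), p_2 = (2/5, 3/5), q_1 = (3/10, 7/10), q_2 = (1/5, 4/5). Then p_mix = q_mix = (1/4, 3/4), and the variances of the five importance-sampling estimators satisfy Var[II(g)] = 37/336 > Var[IM(g)] = 3/50 > Var[MI(g)] = 37/5376 > Var[MM(g)] = Var[MM^str(g)] = 0. -/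
/-!
Each estimator has the form `(1/2) * ∑ i, f i (Z i)` with `Z 0`, `Z 1` independent and
`Fin 2`-valued, so its variance is `(1/4) * ∑ i, Var[f i (Z i)]`, and each of these variances
is an explicit finite sum over the law of `Z i`. For `MM` and `MM^str` the weight
`p_mix / q_mix` is identically `1`, so the estimator is constant.
-/

open MeasureTheory ProbabilityTheory

section

variable {Ω α : Type*} [MeasurableSpace Ω] [MeasurableSpace α] [DiscreteMeasurableSpace α]
  [Fintype α]

lemma variance_fintype (ν : Measure α) [IsProbabilityMeasure ν] (f : α → ℝ) :
    Var[f; ν] = ∑ x, ν.real {x} * f x ^ 2 - (∑ x, ν.real {x} * f x) ^ 2 := by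
  rw [variance_eq_sub .of_discrete, integral_fintype .of_finite, integral_fintype .of_finite]
  simp only [Pi.pow_apply, smul_eq_mul]

variable {μ : Measure Ω} [IsProbabilityMeasure μ]

lemma variance_fun_comp_fintype {Z : Ω → α} (hZ : Measurable Z) (f : α → ℝ) :
    Var[fun ω => f (Z ω); μ]
      = ∑ x, μ.real (Z ⁻¹' {x}) * f x ^ 2 - (∑ x, μ.real (Z ⁻¹' {x}) * f x) ^ 2 := by
  have := Measure.isProbabilityMeasure_map (μ := μ) hZ.aemeasurable
  rw [← Function.comp_def, ← variance_map .of_discrete hZ.aemeasurable, variance_fintype]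
  simp only [map_measureReal_apply hZ (measurableSet_singleton _)]

namespace ProbabilityTheory.iIndepFun

variable {ι : Type*} [Fintype ι] {X : ι → Ω → α}

lemma variance_mul_sum_comp (hindep : iIndepFun X μ) (hX : ∀ i, Measurable (X i)) (c : ℝ)
    (f : ι → α → ℝ) :
    Var[fun ω => c * ∑ i, f i (X i ω); μ] = c ^ 2 * ∑ i, Var[fun ω => f i (X i ω); μ] := by
  have hf_indep : iIndepFun (fun i => f i ∘ X i) μ := hindep.comp f fun _ => .of_discrete
  have hf_memLp (i : ι) : MemLp (f i ∘ X i) 2 μ :=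
    MemLp.of_discrete.comp_of_map (hX i).aemeasurable
  have hsum : (fun ω => c * ∑ i, f i (X i ω)) = c • ∑ i, f i ∘ X i := by
    ext ω; simp
  rw [hsum, variance_smul, IndepFun.variance_sum (fun i _ => hf_memLp i)
    fun i _ j _ hij => hf_indep.indepFun hij]
  rfl

lemma variance_mul_sum_comp_fintype (hindep : iIndepFun X μ) (hX : ∀ i, Measurable (X i))
    (c : ℝ) (f : ι → α → ℝ) :
    Var[fun ω => c * ∑ i, f i (X i ω); μ] = c ^ 2 * ∑ i,
      (∑ x, μ.real (X i ⁻¹' {x}) * f i x ^ 2 - (∑ x, μ.real (X i ⁻¹' {x}) * f i x) ^ 2) := by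
  simp only [hindep.variance_mul_sum_comp hX, variance_fun_comp_fintype (hX _)]

end ProbabilityTheory.iIndepFun

end

/-- On the two-point space `X = {0,1}` with `N = 2`, `g ≡ 1`,
`p₁ = (1/10, 9/10)`, `p₂ = (2/5, 3/5)`, `q₁ = (3/10, 7/10)`, `q₂ = (1/5, 4/5)`:
then `p_mix = q_mix = (1/4, 3/4)` and
`Var[II] = 37/336 > Var[IM] = 3/50 > Var[MI] = 37/5376 > Var[MM] = Var[MM^str] = 0`. -/
theorem two_point_counterexample_II_gt_IM_gt_MI
    {Ω : Type} [MeasurableSpace Ω] (μ : Measure Ω) [IsProbabilityMeasure μ]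
    (p q : Fin 2 → Fin 2 → ℝ)
    (hp : p = ![![1/10, 9/10], ![2/5, 3/5]])
    (hq : q = ![![3/10, 7/10], ![1/5, 4/5]])
    (pmix qmix : Fin 2 → ℝ)
    (hpmix : ∀ x, pmix x = (1/2) * (p 0 x + p 1 x))
    (hqmix : ∀ x, qmix x = (1/2) * (q 0 x + q 1 x))
    (g : Fin 2 → ℝ) (hg : ∀ x, g x = 1)
    -- X₁, X₂ independent, X_i distributed according to q_i
    (X Y : Fin 2 → Ω → Fin 2)
    (hXm : ∀ i, Measurable (X i)) (hYm : ∀ i, Measurable (Y i))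
    (hXindep : iIndepFun X μ)
    (hYindep : iIndepFun Y μ)
    (hXlaw : ∀ i j, μ (X i ⁻¹' {j}) = ENNReal.ofReal (q i j))
    -- Y₁, Y₂ i.i.d. according to q_mix
    (hYlaw : ∀ i j, μ (Y i ⁻¹' {j}) = ENNReal.ofReal (qmix j)) :
    pmix = ![1/4, 3/4] ∧ qmix = ![1/4, 3/4] ∧
    -- Var[II(g)] = 37/336
    variance (fun ω => (1/2) * ∑ i, (p i (X i ω) / q i (X i ω)) * g (X i ω)) μ = 37/336 ∧
    -- Var[IM(g)] = 3/50
    variance (fun ω => (1/2) * ∑ i, (p i (Y i ω) / qmix (Y i ω)) * g (Y i ω)) μ = 3/50 ∧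
    -- Var[MI(g)] = 37/5376
    variance (fun ω => (1/2) * ∑ i, (pmix (X i ω) / q i (X i ω)) * g (X i ω)) μ = 37/5376 ∧
    -- Var[MM(g)] = 0
    variance (fun ω => (1/2) * ∑ i, (pmix (Y i ω) / qmix (Y i ω)) * g (Y i ω)) μ = 0 ∧
    -- Var[MM^str(g)] = 0
    variance (fun ω => (1/2) * ∑ i, (pmix (X i ω) / qmix (X i ω)) * g (X i ω)) μ = 0 ∧
    -- and the chain of strict inequalities
    (37/336 : ℝ) > 3/50 ∧ (3/50 : ℝ) > 37/5376 ∧ (37/5376 : ℝ) > 0 := by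
  have hpmix' : pmix = ![1/4, 3/4] := by
    funext x; fin_cases x <;> norm_num [hpmix, hp]
  have hqmix' : qmix = ![1/4, 3/4] := by
    funext x; fin_cases x <;> norm_num [hqmix, hq]
  have hXweight (i j : Fin 2) : μ.real (X i ⁻¹' {j}) = q i j := by
    rw [measureReal_def, hXlaw, ENNReal.toReal_ofReal]
    subst hq; fin_cases i <;> fin_cases j <;> norm_num
  have hYweight (i j : Fin 2) : μ.real (Y i ⁻¹' {j}) = qmix j := by
    rw [measureReal_def, hYlaw, ENNReal.toReal_ofReal]
    subst hqmix'; fin_cases j <;> norm_num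
  refine ⟨hpmix', hqmix', ?II, ?IM, ?MI, ?MM, ?MMstr, by norm_num, by norm_num, by norm_num⟩
  -- `f i (X i ω)` is not a higher-order pattern, so each integrand `f` is supplied by hand.
  case' II => rw [hXindep.variance_mul_sum_comp_fintype hXm _ fun i x => p i x / q i x * g x]
  case' IM => rw [hYindep.variance_mul_sum_comp_fintype hYm _ fun i x => p i x / qmix x * g x]
  case' MI => rw [hXindep.variance_mul_sum_comp_fintype hXm _ fun i x => pmix x / q i x * g x]
  case' MM => rw [hYindep.variance_mul_sum_comp_fintype hYm _ fun _ x => pmix x / qmix x * g x]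
  case' MMstr =>
    rw [hXindep.variance_mul_sum_comp_fintype hXm _ fun _ x => pmix x / qmix x * g x]
  all_goals
    simp only [hXweight, hYweight, Fin.sum_univ_two, hp, hq, hpmix', hqmix', hg]
    norm_num
end

section
/- Analytic core of the weight-variance optimality theorem: let q_1,…,q_N : ℝ^d → (0,∞) be strictly positive probability density functions, let f_1,…,f_N : ℝ^d → [0,∞) be measurable, and set p_mix := (1/N)·Σ_{i=1}^N f_i and q_mix := (1/N)·Σ_{i=1}^N q_i. Then Σ_{i=1}^N ∫ (p_mix/q_mix)²·q_i dx ≤ Σ_{i=1}^N ∫ (f_i²/q_i) dx, with both sides taking values in [0, +∞]. Equivalently, N·∫ (p_mix²/q_mix) dx ≤ Σ_{i=1}^N ∫ (f_i²/q_i) dx. -/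
open MeasureTheory

/-!
Pointwise, `(p_mix / q_mix)² · Σ q_i = (Σ f_i)² / Σ q_i ≤ Σ f_i² / q_i` is Titu's lemma (the
factors `1/N` cancel in the ratio); integrate over `x`.
-/

theorem sq_sum_div_sum_mul_sum_le {ι R : Type*} [Field R] [LinearOrder R] [IsStrictOrderedRing R]
    (s : Finset ι) (f : ι → R) {g : ι → R}
    (hg : ∀ i ∈ s, 0 < g i) :
    ((∑ i ∈ s, f i) / ∑ i ∈ s, g i) ^ 2 * ∑ i ∈ s, g i ≤ ∑ i ∈ s, f i ^ 2 / g i := by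
  have hcancel : ∀ a b : R, (a / b) ^ 2 * b = a ^ 2 / b := fun a b => by
    rcases eq_or_ne b 0 with rfl | hb
    · simp
    · field_simp
  rw [hcancel]
  exact Finset.sq_sum_div_le_sum_sq_div s f hg

theorem sum_lintegral_sq_sum_div_sum_mul_le {α ι : Type*} [MeasurableSpace α] {μ : Measure α}
    (s : Finset ι) {f g : ι → α → ℝ} (hf : ∀ i ∈ s, Measurable (f i))
    (hg : ∀ i ∈ s, Measurable (g i)) (hg_pos : ∀ i ∈ s, ∀ x, 0 < g i x) :
    ∑ i ∈ s, ∫⁻ x, ENNReal.ofReal (((∑ j ∈ s, f j x) / ∑ j ∈ s, g j x) ^ 2 * g i x) ∂μ ≤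
      ∑ i ∈ s, ∫⁻ x, ENNReal.ofReal (f i x ^ 2 / g i x) ∂μ := by
  rw [← lintegral_finsetSum s fun i hi => by have := hg i hi; fun_prop,
    ← lintegral_finsetSum s fun i hi => by have := hf i hi; have := hg i hi; fun_prop]
  refine lintegral_mono fun x => ?_
  rw [← ENNReal.ofReal_sum_of_nonneg fun i hi => by have := hg_pos i hi x; positivity,
    ← ENNReal.ofReal_sum_of_nonneg fun i hi => by have := hg_pos i hi x; positivity,
    ← Finset.mul_sum]
  exact ENNReal.ofReal_le_ofReal (sq_sum_div_sum_mul_sum_le s _ fun i hi => hg_pos i hi x)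

theorem mixture_weight_variance_optimality_general
    {d N : ℕ} (hN : 1 ≤ N)
    (q f : Fin N → (Fin d → ℝ) → ℝ)
    (hq_pos : ∀ i x, 0 < q i x)
    (hq_meas : ∀ i, Measurable (q i))
    (hf_meas : ∀ i, Measurable (f i))
    (pmix qmix : (Fin d → ℝ) → ℝ)
    (hpmix : ∀ x, pmix x = (N : ℝ)⁻¹ * ∑ i, f i x)
    (hqmix : ∀ x, qmix x = (N : ℝ)⁻¹ * ∑ i, q i x) :
    ∑ i, ∫⁻ x, ENNReal.ofReal ((pmix x / qmix x) ^ 2 * q i x) ≤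
      ∑ i, ∫⁻ x, ENNReal.ofReal ((f i x) ^ 2 / q i x) := by
  have hN_inv : (N : ℝ)⁻¹ ≠ 0 := inv_ne_zero (Nat.cast_ne_zero.mpr (by omega))
  have hratio : ∀ x, pmix x / qmix x = (∑ i, f i x) / ∑ i, q i x := fun x => by
    rw [hpmix, hqmix, mul_div_mul_left _ _ hN_inv]
  simp only [hratio]
  exact sum_lintegral_sq_sum_div_sum_mul_le _ (fun i _ => hf_meas i) (fun i _ => hq_meas i)
    fun i _ => hq_pos i

/-- Analytic core of the weight-variance optimality theorem
(integrated Titu's lemma): for strictly positive probability densities `q_i`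
and nonnegative measurable `f_i`, with `p_mix = (1/N)·Σ f_i` and
`q_mix = (1/N)·Σ q_i`,
`Σ_i ∫ (p_mix/q_mix)²·q_i ≤ Σ_i ∫ f_i²/q_i` in `[0, +∞]`. -/
theorem mixture_weight_variance_optimality
    {d N : ℕ} (hN : 1 ≤ N)
    (q f : Fin N → (Fin d → ℝ) → ℝ)
    (hq_pos : ∀ i x, 0 < q i x)
    (hq_meas : ∀ i, Measurable (q i))
    (hq_prob : ∀ i, ∫ x, q i x = 1)
    (hf_nonneg : ∀ i x, 0 ≤ f i x)
    (hf_meas : ∀ i, Measurable (f i))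
    (pmix qmix : (Fin d → ℝ) → ℝ)
    (hpmix : ∀ x, pmix x = (N : ℝ)⁻¹ * ∑ i, f i x)
    (hqmix : ∀ x, qmix x = (N : ℝ)⁻¹ * ∑ i, q i x) :
    ∑ i, ∫⁻ x, ENNReal.ofReal ((pmix x / qmix x) ^ 2 * q i x) ≤
      ∑ i, ∫⁻ x, ENNReal.ofReal ((f i x) ^ 2 / q i x) :=
  mixture_weight_variance_optimality_general hN q f hq_pos hq_meas hf_meas pmix qmix hpmix hqmix
end

section
/- EnKF matrix identity (iii): with H, Q, R, S, K, Σ as in the context, det Σ · det S = det Q · det R; in particular, Σ is symmetric positive definite. -/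
/-!
With the gain equation `K S = Q Hᵀ`, the cross terms of the Joseph form cancel against `K S Kᵀ`,
so `Σ = (I - K H) Q`. By Weinstein–Aronszajn, `det (I - K H) = det (I - H K)`, and
`(I - H K) S = S - H Q Hᵀ = R`. Multiplying gives the determinant identity; in particular
`I - K H` is invertible, so the Joseph form is a congruence of `Q` plus a positive semidefinite term.
-/

open Matrix

namespace Matrix

section CommRing

variable {n p α : Type*} [Fintype n] [Fintype p] [DecidableEq n] [CommRing α]
  {H : Matrix p n α} {Q : Matrix n n α} {R : Matrix p p α} {K : Matrix n p α}

theorem joseph_form_eq_of_mul_eq (hK : K * (H * Q * Hᵀ + R) = Q * Hᵀ) :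
    (1 - K * H) * Q * (1 - K * H)ᵀ + K * R * Kᵀ = (1 - K * H) * Q := by
  have hKSK : K * H * Q * Hᵀ * Kᵀ + K * R * Kᵀ = Q * Hᵀ * Kᵀ := by
    rw [← hK]; simp only [Matrix.mul_add, Matrix.add_mul, Matrix.mul_assoc]
  rw [transpose_sub, transpose_one, transpose_mul]
  calc (1 - K * H) * Q * (1 - Hᵀ * Kᵀ) + K * R * Kᵀ
      = (1 - K * H) * Q - Q * Hᵀ * Kᵀ + (K * H * Q * Hᵀ * Kᵀ + K * R * Kᵀ) := by
        simp only [Matrix.sub_mul, Matrix.mul_sub, Matrix.one_mul, Matrix.mul_one, Matrix.mul_assoc]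
        abel
    _ = (1 - K * H) * Q := by rw [hKSK]; abel

theorem det_one_sub_mul_mul_det_eq_of_mul_eq [DecidableEq p] (hK : K * (H * Q * Hᵀ + R) = Q * Hᵀ) :
    (1 - K * H).det * (H * Q * Hᵀ + R).det = R.det := by
  have hRS : (1 - H * K) * (H * Q * Hᵀ + R) = R := by
    rw [Matrix.sub_mul, Matrix.one_mul, Matrix.mul_assoc H K, hK, Matrix.mul_assoc H Q]
    exact add_sub_cancel_left _ _
  rw [det_one_sub_mul_comm, ← det_mul, hRS]

end CommRing

variable {n p : Type*} [Fintype n] [Fintype p]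

theorem PosSemidef.mul_mul_transpose {A : Matrix n n ℝ} (hA : A.PosSemidef) (B : Matrix p n ℝ) :
    (B * A * Bᵀ).PosSemidef := by
  simpa only [conjTranspose_eq_transpose_of_trivial] using hA.mul_mul_conjTranspose_same B

theorem PosDef.mul_mul_transpose_of_isUnit [DecidableEq n] {A B : Matrix n n ℝ} (hA : A.PosDef)
    (hB : IsUnit B) :
    (B * A * Bᵀ).PosDef := by
  simpa only [conjTranspose_eq_transpose_of_trivial] using
    hA.mul_mul_conjTranspose_same (vecMul_injective_iff_isUnit.2 hB)

end Matrix

theorem enkf_matrix_identity_iii_general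
    {d m : ℕ}
    (H : Matrix (Fin m) (Fin d) ℝ)
    (Q : Matrix (Fin d) (Fin d) ℝ) (R : Matrix (Fin m) (Fin m) ℝ)
    (hQ : Q.PosDef) (hR : R.PosDef)
    (S : Matrix (Fin m) (Fin m) ℝ) (hS : S = H * Q * Hᵀ + R)
    (K : Matrix (Fin d) (Fin m) ℝ) (hK : K = Q * Hᵀ * S⁻¹)
    (Sig : Matrix (Fin d) (Fin d) ℝ)
    (hSig : Sig = (1 - K * H) * Q * (1 - K * H)ᵀ + K * R * Kᵀ) :
    Sig.det * S.det = Q.det * R.det ∧ Sig.PosDef := by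
  have hSpd : S.PosDef := hS ▸ PosDef.posSemidef_add (hQ.posSemidef.mul_mul_transpose H) hR
  have hgain : K * S = Q * Hᵀ := by
    rw [hK, nonsing_inv_mul_cancel_right _ _ hSpd.det_pos.ne'.isUnit]
  subst hS hSig
  have hdet := det_one_sub_mul_mul_det_eq_of_mul_eq hgain
  have hunit : IsUnit (1 - K * H) :=
    (isUnit_iff_isUnit_det _).2 (isUnit_of_mul_isUnit_left (hdet ▸ hR.det_pos.ne'.isUnit))
  constructor
  · rw [joseph_form_eq_of_mul_eq hgain, det_mul, mul_right_comm, hdet, mul_comm]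
  · exact (hQ.mul_mul_transpose_of_isUnit hunit).add_posSemidef
      (hR.posSemidef.mul_mul_transpose K)

/-- EnKF matrix identity (iii): with `S = H·Q·Hᵀ + R`,
`K = Q·Hᵀ·S⁻¹` and `Σ = (I − K·H)·Q·(I − K·H)ᵀ + K·R·Kᵀ`, one has
`det Σ · det S = det Q · det R`; in particular `Σ` is symmetric positive
definite. -/
theorem enkf_matrix_identity_iii
    {d m : ℕ} (hd : 1 ≤ d) (hm : 1 ≤ m)
    (H : Matrix (Fin m) (Fin d) ℝ)
    (Q : Matrix (Fin d) (Fin d) ℝ) (R : Matrix (Fin m) (Fin m) ℝ)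
    (hQ : Q.PosDef) (hR : R.PosDef)
    (S : Matrix (Fin m) (Fin m) ℝ) (hS : S = H * Q * Hᵀ + R)
    (K : Matrix (Fin d) (Fin m) ℝ) (hK : K = Q * Hᵀ * S⁻¹)
    (Sig : Matrix (Fin d) (Fin d) ℝ)
    (hSig : Sig = (1 - K * H) * Q * (1 - K * H)ᵀ + K * R * Kᵀ) :
    Sig.det * S.det = Q.det * R.det ∧ Sig.PosDef :=
  enkf_matrix_identity_iii_general H Q R hQ hR S hS K hK Sig hSig
end

section
/- EnKF matrix identity (iv): with the notation of the context, the gain difference satisfies Δ_K := K_t − K = (I_d − K_t·H)·(Q_t − Q)·H^⊤·S^{-1}. -/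
/-!
Since `K_t S_t = Q_t Hᵀ`, writing `K_t = K_t S S⁻¹` gives
`K_t - K = (Q_t - Q) Hᵀ S⁻¹ - K_t (S_t - S) S⁻¹`, and `S_t - S = H (Q_t - Q) Hᵀ`.
-/

open Matrix

variable {m n α : Type*} [Fintype n]

section CommRing

variable [CommRing α]

def innovationCov (H : Matrix m n α) (Q : Matrix n n α) (R : Matrix m m α) : Matrix m m α :=
  H * Q * Hᵀ + R

theorem innovationCov_sub_innovationCov (H : Matrix m n α) (Q Q' : Matrix n n α)
    (R : Matrix m m α) :
    innovationCov H Q' R - innovationCov H Q R = H * (Q' - Q) * Hᵀ := by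
  simp only [innovationCov, Matrix.mul_sub, Matrix.sub_mul, add_sub_add_right_eq_sub]

variable [Fintype m] [DecidableEq m]

noncomputable def kalmanGain (H : Matrix m n α) (Q : Matrix n n α) (R : Matrix m m α) :
    Matrix n m α :=
  Q * Hᵀ * (innovationCov H Q R)⁻¹

theorem kalmanGain_mul_innovationCov {H : Matrix m n α} {Q : Matrix n n α} {R : Matrix m m α}
    (hS : IsUnit (innovationCov H Q R).det) :
    kalmanGain H Q R * innovationCov H Q R = Q * Hᵀ := by
  rw [kalmanGain, Matrix.mul_assoc, nonsing_inv_mul _ hS, Matrix.mul_one]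

theorem kalmanGain_sub_kalmanGain [DecidableEq n] {H : Matrix m n α} {Q Q' : Matrix n n α}
    {R : Matrix m m α} (hS : IsUnit (innovationCov H Q R).det)
    (hS' : IsUnit (innovationCov H Q' R).det) :
    kalmanGain H Q' R - kalmanGain H Q R =
      (1 - kalmanGain H Q' R * H) * (Q' - Q) * Hᵀ * (innovationCov H Q R)⁻¹ := by
  set S := innovationCov H Q R
  set S' := innovationCov H Q' R
  set K' := kalmanGain H Q' R
  calc K' - kalmanGain H Q R
      = (Q' - Q) * Hᵀ * S⁻¹ - K' * (S' - S) * S⁻¹ := by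
        rw [Matrix.mul_sub, kalmanGain_mul_innovationCov hS', Matrix.sub_mul (Q' * Hᵀ),
          Matrix.mul_assoc K' S, mul_nonsing_inv _ hS, Matrix.mul_one, kalmanGain,
          Matrix.sub_mul, Matrix.sub_mul]
        abel
    _ = (1 - K' * H) * (Q' - Q) * Hᵀ * S⁻¹ := by
        rw [innovationCov_sub_innovationCov]
        simp only [Matrix.sub_mul, Matrix.one_mul, Matrix.mul_assoc]

end CommRing

theorem innovationCov_posDef [Fintype m] [DecidableEq m] (H : Matrix m n ℝ) {Q : Matrix n n ℝ}
    {R : Matrix m m ℝ} (hQ : Q.PosSemidef) (hR : R.PosDef) : (innovationCov H Q R).PosDef := by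
  have hHQH : (H * Q * Hᵀ).PosSemidef := by
    simpa only [conjTranspose_eq_transpose_of_trivial] using hQ.mul_mul_conjTranspose_same H
  exact PosDef.posSemidef_add hHQH hR

theorem enkf_matrix_identity_iv_general
    {d m : ℕ}
    (H : Matrix (Fin m) (Fin d) ℝ)
    (Q Qt : Matrix (Fin d) (Fin d) ℝ) (R : Matrix (Fin m) (Fin m) ℝ)
    (hQ : Q.PosDef) (hQt : Qt.PosDef) (hR : R.PosDef)
    (S St : Matrix (Fin m) (Fin m) ℝ)
    (hS : S = H * Q * Hᵀ + R) (hSt : St = H * Qt * Hᵀ + R)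
    (K Kt : Matrix (Fin d) (Fin m) ℝ)
    (hK : K = Q * Hᵀ * S⁻¹) (hKt : Kt = Qt * Hᵀ * St⁻¹) :
    Kt - K = (1 - Kt * H) * (Qt - Q) * Hᵀ * S⁻¹ := by
  subst hS hSt hK hKt
  exact kalmanGain_sub_kalmanGain
    ((isUnit_iff_isUnit_det _).mp (innovationCov_posDef H hQ.posSemidef hR).isUnit)
    ((isUnit_iff_isUnit_det _).mp (innovationCov_posDef H hQt.posSemidef hR).isUnit)

/-- EnKF matrix identity (iv): with `S = H·Q·Hᵀ + R`,
`K = Q·Hᵀ·S⁻¹`, `S_t = H·Q_t·Hᵀ + R` and `K_t = Q_t·Hᵀ·S_t⁻¹`, the gain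
difference satisfies `K_t − K = (I − K_t·H)·(Q_t − Q)·Hᵀ·S⁻¹`. -/
theorem enkf_matrix_identity_iv
    {d m : ℕ} (hd : 1 ≤ d) (hm : 1 ≤ m)
    (H : Matrix (Fin m) (Fin d) ℝ)
    (Q Qt : Matrix (Fin d) (Fin d) ℝ) (R : Matrix (Fin m) (Fin m) ℝ)
    (hQ : Q.PosDef) (hQt : Qt.PosDef) (hR : R.PosDef)
    (S St : Matrix (Fin m) (Fin m) ℝ)
    (hS : S = H * Q * Hᵀ + R) (hSt : St = H * Qt * Hᵀ + R)
    (K Kt : Matrix (Fin d) (Fin m) ℝ)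
    (hK : K = Q * Hᵀ * S⁻¹) (hKt : Kt = Qt * Hᵀ * St⁻¹) :
    Kt - K = (1 - Kt * H) * (Qt - Q) * Hᵀ * S⁻¹ :=
  enkf_matrix_identity_iv_general H Q Qt R hQ hQt hR S St hS hSt K Kt hK hKt
end

section
/- EnKF matrix identity (v): with the notation of the context, the proposal-covariance difference satisfies Δ_Σ := Σ_t − Σ = Δ_K·S·Δ_K^⊤, where Δ_K := K_t − K. Consequently Δ_Σ is symmetric positive semidefinite, Σ_t is symmetric positive definite, and the ranges (column spaces) of Δ_Σ and Δ_K coincide. -/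
/-!
For a gain `G` let `J(G) = (1 - G H) Q (1 - G H)ᴴ + G R Gᴴ` (the Joseph form, `josephCov`),
so that `Σ = J(K)` and `Σ_t = J(K_t)`. Expanding, `J(G) = Q - G H Q - Q Hᴴ Gᴴ + G S Gᴴ`, and
since `Q Hᴴ = K S` this is a square completed at `K`: `J(G) = J(K) + (G - K) S (G - K)ᴴ`.
As `S` is positive definite, `(G - K) S (G - K)ᴴ` is positive semidefinite with the same
kernel as `(G - K)ᴴ`, hence the same rank and (containing it) the same range as `G - K`.
Finally `J(G)` is positive definite: both summands are semidefinite, and a common null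
vector `x` satisfies `(1 - G H)ᴴ x = 0 = Gᴴ x`, so `x = (1 - G H)ᴴ x + Hᴴ Gᴴ x = 0`.
-/

open Matrix

namespace Matrix

variable {m n : Type*} [Fintype m] [Fintype n]

section Joseph

variable {α : Type*} [Ring α] [StarRing α] [DecidableEq n]

def josephCov (H : Matrix m n α) (Q : Matrix n n α) (R : Matrix m m α) (G : Matrix n m α) :
    Matrix n n α :=
  (1 - G * H) * Q * (1 - G * H)ᴴ + G * R * Gᴴ

lemma josephCov_eq (H : Matrix m n α) (Q : Matrix n n α) (R : Matrix m m α) (G : Matrix n m α) :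
    josephCov H Q R G = Q - G * (H * Q) - Q * Hᴴ * Gᴴ + G * (H * Q * Hᴴ + R) * Gᴴ := by
  simp only [josephCov, conjTranspose_sub, conjTranspose_one, conjTranspose_mul,
    Matrix.sub_mul, Matrix.mul_sub, Matrix.add_mul, Matrix.mul_add, Matrix.mul_assoc,
    Matrix.one_mul, Matrix.mul_one]
  abel

lemma josephCov_sub_josephCov {H : Matrix m n α} {Q : Matrix n n α} {R S : Matrix m m α}
    {K : Matrix n m α} (hQ : Qᴴ = Q) (hR : Rᴴ = R) (hS : S = H * Q * Hᴴ + R)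
    (hK : K * S = Q * Hᴴ) (G : Matrix n m α) :
    josephCov H Q R G - josephCov H Q R K = (G - K) * S * (G - K)ᴴ := by
  have hS_herm : Sᴴ = S := by
    simp only [hS, conjTranspose_add, conjTranspose_mul, conjTranspose_conjTranspose, hQ, hR,
      Matrix.mul_assoc]
  have hHQ : H * Q = S * Kᴴ := by
    rw [← hS_herm, ← conjTranspose_mul, hK, conjTranspose_mul, conjTranspose_conjTranspose, hQ]
  rw [josephCov_eq, josephCov_eq, ← hS, hHQ, ← hK]
  simp only [conjTranspose_sub, Matrix.sub_mul, Matrix.mul_sub, Matrix.mul_assoc]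
  abel

end Joseph

lemma rank_eq_rank_of_ker_mulVecLin_eq {l₁ l₂ F : Type*} [Field F] {A : Matrix l₁ n F}
    {B : Matrix l₂ n F} (h : LinearMap.ker A.mulVecLin = LinearMap.ker B.mulVecLin) :
    A.rank = B.rank := by
  have hA := A.mulVecLin.finrank_range_add_finrank_ker
  have hB := B.mulVecLin.finrank_range_add_finrank_ker
  rw [h] at hA
  rw [rank, rank]
  omega

section RCLike

open scoped ComplexOrder

variable {𝕜 : Type*} [RCLike 𝕜]

lemma PosDef.mul_mul_conjTranspose_mulVec_eq_zero_iff {S : Matrix m m 𝕜} (hS : S.PosDef)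
    (B : Matrix n m 𝕜) (x : n → 𝕜) : (B * S * Bᴴ) *ᵥ x = 0 ↔ Bᴴ *ᵥ x = 0 := by
  rw [← (hS.posSemidef.mul_mul_conjTranspose_same B).dotProduct_mulVec_zero_iff,
    ← mulVec_mulVec, ← mulVec_mulVec, dotProduct_mulVec,
    show star x ᵥ* B = star (Bᴴ *ᵥ x) by rw [star_mulVec, conjTranspose_conjTranspose]]
  exact ⟨fun h => by_contra fun hne => (hS.dotProduct_mulVec_pos hne).ne' h,
    fun h => by simp [h]⟩

lemma PosSemidef.add_posDef_of_mulVec_eq_zero {A B : Matrix n n 𝕜} (hA : A.PosSemidef)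
    (hB : B.PosSemidef) (h : ∀ x, A *ᵥ x = 0 → B *ᵥ x = 0 → x = 0) : (A + B).PosDef := by
  refine PosDef.of_dotProduct_mulVec_pos (hA.isHermitian.add hB.isHermitian) fun x hx => ?_
  rw [add_mulVec, dotProduct_add]
  have hA0 := hA.dotProduct_mulVec_nonneg x
  have hB0 := hB.dotProduct_mulVec_nonneg x
  refine (add_nonneg hA0 hB0).lt_of_ne fun hsum => hx ?_
  obtain ⟨hAx, hBx⟩ := (add_eq_zero_iff_of_nonneg hA0 hB0).1 hsum.symm
  exact h x ((hA.dotProduct_mulVec_zero_iff x).1 hAx) ((hB.dotProduct_mulVec_zero_iff x).1 hBx)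

lemma posDef_josephCov [DecidableEq n] (H : Matrix m n 𝕜) {Q : Matrix n n 𝕜}
    {R : Matrix m m 𝕜} (hQ : Q.PosDef) (hR : R.PosDef) (G : Matrix n m 𝕜) :
    (josephCov H Q R G).PosDef := by
  refine (hQ.posSemidef.mul_mul_conjTranspose_same _).add_posDef_of_mulVec_eq_zero
    (hR.posSemidef.mul_mul_conjTranspose_same G) fun x hQx hRx => ?_
  rw [hQ.mul_mul_conjTranspose_mulVec_eq_zero_iff] at hQx
  rw [hR.mul_mul_conjTranspose_mulVec_eq_zero_iff] at hRx
  calc x = (1 - G * H)ᴴ *ᵥ x + Hᴴ *ᵥ (Gᴴ *ᵥ x) := by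
        simp only [conjTranspose_sub, conjTranspose_one, conjTranspose_mul, sub_mulVec,
          one_mulVec, mulVec_mulVec, sub_add_cancel]
    _ = 0 := by rw [hQx, hRx, mulVec_zero, add_zero]

lemma PosDef.range_mulVecLin_mul_mul_conjTranspose {S : Matrix m m 𝕜} (hS : S.PosDef)
    (B : Matrix n m 𝕜) :
    LinearMap.range (B * S * Bᴴ).mulVecLin = LinearMap.range B.mulVecLin := by
  have hle : LinearMap.range (B * S * Bᴴ).mulVecLin ≤ LinearMap.range B.mulVecLin := by
    rw [Matrix.mul_assoc, mulVecLin_mul]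
    exact LinearMap.range_comp_le_range _ _
  have hker : LinearMap.ker (B * S * Bᴴ).mulVecLin = LinearMap.ker Bᴴ.mulVecLin := by
    ext x
    simp only [LinearMap.mem_ker, mulVecLin_apply, hS.mul_mul_conjTranspose_mulVec_eq_zero_iff]
  refine Submodule.eq_of_le_of_finrank_le hle (le_of_eq ?_)
  calc Module.finrank 𝕜 (LinearMap.range B.mulVecLin) = Bᴴ.rank := (rank_conjTranspose B).symm
    _ = (B * S * Bᴴ).rank := (rank_eq_rank_of_ker_mulVecLin_eq hker).symm

end RCLike

end Matrix

theorem enkf_matrix_identity_v_general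
    {d m : ℕ}
    (H : Matrix (Fin m) (Fin d) ℝ)
    (Q : Matrix (Fin d) (Fin d) ℝ) (R : Matrix (Fin m) (Fin m) ℝ)
    (hQ : Q.PosDef) (hR : R.PosDef)
    (S : Matrix (Fin m) (Fin m) ℝ)
    (hS : S = H * Q * Hᵀ + R)
    (K Kt : Matrix (Fin d) (Fin m) ℝ)
    (hK : K = Q * Hᵀ * S⁻¹)
    (Sig Sigt : Matrix (Fin d) (Fin d) ℝ)
    (hSig : Sig = (1 - K * H) * Q * (1 - K * H)ᵀ + K * R * Kᵀ)
    -- note: Σ_t is built from Q, with only the gain replaced by K_t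
    (hSigt : Sigt = (1 - Kt * H) * Q * (1 - Kt * H)ᵀ + Kt * R * Ktᵀ) :
    Sigt - Sig = (Kt - K) * S * (Kt - K)ᵀ ∧
    (Sigt - Sig).PosSemidef ∧
    Sigt.PosDef ∧
    LinearMap.range (Sigt - Sig).mulVecLin = LinearMap.range (Kt - K).mulVecLin := by
  simp only [← conjTranspose_eq_transpose_of_trivial] at hS hK hSig hSigt ⊢
  have hS_pos : S.PosDef := hS ▸ .posSemidef_add (hQ.posSemidef.mul_mul_conjTranspose_same H) hR
  have hKS : K * S = Q * Hᴴ := by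
    rw [hK, nonsing_inv_mul_cancel_right (h := hS_pos.det_pos.ne'.isUnit)]
  have hdiff : Sigt - Sig = (Kt - K) * S * (Kt - K)ᴴ := by
    rw [hSig, hSigt]
    exact josephCov_sub_josephCov hQ.isHermitian.eq hR.isHermitian.eq hS hKS Kt
  exact ⟨hdiff, hdiff ▸ hS_pos.posSemidef.mul_mul_conjTranspose_same _,
    hSigt ▸ posDef_josephCov H hQ hR Kt, hdiff ▸ hS_pos.range_mulVecLin_mul_mul_conjTranspose _⟩

/-- EnKF matrix identity (v): with the EnKF matrices as in
the context, `Σ_t − Σ = Δ_K·S·Δ_Kᵀ` where `Δ_K = K_t − K`; consequently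
`Σ_t − Σ` is symmetric positive semidefinite, `Σ_t` is symmetric positive
definite, and the ranges (column spaces) of `Σ_t − Σ` and `Δ_K` coincide. -/
theorem enkf_matrix_identity_v
    {d m : ℕ} (hd : 1 ≤ d) (hm : 1 ≤ m)
    (H : Matrix (Fin m) (Fin d) ℝ)
    (Q Qt : Matrix (Fin d) (Fin d) ℝ) (R : Matrix (Fin m) (Fin m) ℝ)
    (hQ : Q.PosDef) (hQt : Qt.PosDef) (hR : R.PosDef)
    (S St : Matrix (Fin m) (Fin m) ℝ)
    (hS : S = H * Q * Hᵀ + R) (hSt : St = H * Qt * Hᵀ + R)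
    (K Kt : Matrix (Fin d) (Fin m) ℝ)
    (hK : K = Q * Hᵀ * S⁻¹) (hKt : Kt = Qt * Hᵀ * St⁻¹)
    (Sig Sigt : Matrix (Fin d) (Fin d) ℝ)
    (hSig : Sig = (1 - K * H) * Q * (1 - K * H)ᵀ + K * R * Kᵀ)
    -- note: Σ_t is built from Q, with only the gain replaced by K_t
    (hSigt : Sigt = (1 - Kt * H) * Q * (1 - Kt * H)ᵀ + Kt * R * Ktᵀ) :
    Sigt - Sig = (Kt - K) * S * (Kt - K)ᵀ ∧
    (Sigt - Sig).PosSemidef ∧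
    Sigt.PosDef ∧
    LinearMap.range (Sigt - Sig).mulVecLin = LinearMap.range (Kt - K).mulVecLin :=
  enkf_matrix_identity_v_general H Q R hQ hR S hS K Kt hK Sig Sigt hSig hSigt
end

section
/- Bound on the target–proposal ratio: with the notation of the context, fix z ∈ ℝ^d and y ∈ ℝ^m, and define the unnormalized target p(x) := exp(−(1/2)·(y − H·x)^⊤·R^{-1}·(y − H·x)) · 𝒩(z, Q)(x) and the proposal q(x) := 𝒩(m_t, Σ_t)(x) with m_t := z + K_t·(y − H·z). Then Σ^{-1} − Σ_t^{-1} is symmetric positive semidefinite and there exists u ∈ ℝ^d such that for every x ∈ ℝ^d: p(x)/q(x) ≤ (det Σ_t / det Q)^{1/2} · exp(−(1/2)·(x − u)^⊤·(Σ^{-1} − Σ_t^{-1})·(x − u)). -/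
/-!
For a gain `L` write `Σ_L := (1 - L H) Q (1 - L H)ᵀ + L R Lᵀ`. Expanding,
`Σ_L = Q - K S Kᵀ + (L - K) S (L - K)ᵀ`; hence `Σ = Σ_K = (Q⁻¹ + Hᵀ R⁻¹ H)⁻¹` by Woodbury, and
`Σ_t = Σ + D S Dᵀ` with `D = K_t - K`, so `Σ⁻¹ - Σ_t⁻¹ ⪰ 0` because inversion is antitone on
positive definite matrices.

Completing the square, the exponent of `p` is `(x - μ)ᵀ Σ⁻¹ (x - μ) + eᵀ S⁻¹ e` with
`e = y - H z` and `μ = z + K e`, while `q` is centred at `μ + D e`. Since `D e` lies in the range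
of `D S Dᵀ`, say `D e = D S Dᵀ M`, the difference of the two exponents is
`(x - u)ᵀ (Σ⁻¹ - Σ_t⁻¹) (x - u) - Mᵀ D e` with `u = μ - Σ M`, and `Mᵀ D e ≤ eᵀ S⁻¹ e` is the
Cauchy–Schwarz inequality for the inner product given by `S`.
-/

open Matrix

noncomputable def gaussDensity {d : ℕ} (μ : Fin d → ℝ)
    (C : Matrix (Fin d) (Fin d) ℝ) (x : Fin d → ℝ) : ℝ :=
  (2 * Real.pi) ^ (-(d : ℝ) / 2) * C.det ^ (-(1 : ℝ) / 2) *
    Real.exp (-(1 / 2) * ((x - μ) ⬝ᵥ C⁻¹.mulVec (x - μ)))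

namespace Matrix

variable {α n p : Type*}

lemma PosSemidef.transpose_eq_self {A : Matrix n n ℝ} (hA : A.PosSemidef) : Aᵀ = A :=
  (isHermitian_iff_isSymm.mp hA.isHermitian).eq

variable [Fintype n] [Fintype p]

section CommRing

variable [CommRing α]

lemma mulVec_dotProduct (A : Matrix n p α) (x : p → α) (y : n → α) :
    (A *ᵥ x) ⬝ᵥ y = x ⬝ᵥ Aᵀ *ᵥ y := by
  rw [dotProduct_transpose_mulVec, dotProduct_comm]

lemma dotProduct_mulVec_comm {A : Matrix n n α} (hA : Aᵀ = A) (x y : n → α) :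
    x ⬝ᵥ A *ᵥ y = y ⬝ᵥ A *ᵥ x := by
  rw [← dotProduct_transpose_mulVec, hA]

lemma dotProduct_mulVec_add_add {A : Matrix n n α} (hA : Aᵀ = A) (v w : n → α) :
    (v + w) ⬝ᵥ A *ᵥ (v + w) = v ⬝ᵥ A *ᵥ v + 2 * (v ⬝ᵥ A *ᵥ w) + w ⬝ᵥ A *ᵥ w := by
  simp only [mulVec_add, add_dotProduct, dotProduct_add, dotProduct_mulVec_comm hA w v]
  ring

lemma dotProduct_mulVec_sub_sub {A : Matrix n n α} (hA : Aᵀ = A) (v w : n → α) :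
    (v - w) ⬝ᵥ A *ᵥ (v - w) = v ⬝ᵥ A *ᵥ v - 2 * (v ⬝ᵥ A *ᵥ w) + w ⬝ᵥ A *ᵥ w := by
  simp only [mulVec_sub, sub_dotProduct, dotProduct_sub, dotProduct_mulVec_comm hA w v]
  ring

lemma dotProduct_mul_mul_transpose_mulVec (D : Matrix n p α) (S : Matrix p p α) (x y : n → α) :
    x ⬝ᵥ (D * S * Dᵀ) *ᵥ y = (Dᵀ *ᵥ x) ⬝ᵥ S *ᵥ (Dᵀ *ᵥ y) := by
  rw [← mulVec_mulVec, ← mulVec_mulVec, dotProduct_mulVec x D, ← mulVec_transpose]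

end CommRing

lemma PosSemidef.mul_mul_transpose_same {S : Matrix p p ℝ} (hS : S.PosSemidef)
    (D : Matrix n p ℝ) : (D * S * Dᵀ).PosSemidef := by
  simpa using hS.mul_mul_conjTranspose_same D

lemma PosDef.ker_mulVecLin_mul_mul_transpose {S : Matrix p p ℝ} (hS : S.PosDef)
    (D : Matrix n p ℝ) : (D * S * Dᵀ).mulVecLin.ker = Dᵀ.mulVecLin.ker := by
  ext v
  simp only [LinearMap.mem_ker, mulVecLin_apply]
  refine ⟨fun hv => ?_, fun hv => by rw [← mulVec_mulVec, hv, mulVec_zero]⟩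
  by_contra hne
  have hpos := hS.dotProduct_mulVec_pos hne
  rw [star_trivial, ← dotProduct_mul_mul_transpose_mulVec, hv, dotProduct_zero] at hpos
  exact hpos.false

lemma PosDef.range_mulVecLin_mul_mul_transpose {S : Matrix p p ℝ} (hS : S.PosDef)
    (D : Matrix n p ℝ) : (D * S * Dᵀ).mulVecLin.range = D.mulVecLin.range := by
  apply Submodule.eq_of_le_of_finrank_eq
  · rw [Matrix.mul_assoc, mulVecLin_mul]
    exact LinearMap.range_comp_le_range _ _
  · have hDSD := LinearMap.finrank_range_add_finrank_ker (D * S * Dᵀ).mulVecLin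
    have hDt := LinearMap.finrank_range_add_finrank_ker Dᵀ.mulVecLin
    have hrank : D.rank = Dᵀ.rank := D.rank_transpose.symm
    rw [hS.ker_mulVecLin_mul_mul_transpose] at hDSD
    simp only [rank] at hrank
    omega

variable [DecidableEq n] [DecidableEq p]

lemma PosDef.inv_sub_inv_add_posSemidef {A G : Matrix n n ℝ} (hA : A.PosDef)
    (hG : G.PosSemidef) : (A⁻¹ - (A + G)⁻¹).PosSemidef := by
  have hB : (A + G).PosDef := hA.add_posSemidef hG
  have hdecomp : A⁻¹ - (A + G)⁻¹ = (A + G)⁻¹ * (G + G * A⁻¹ * G) * (A + G)⁻¹ := by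
    have hGA : G + G * A⁻¹ * G = (A + G) * (A⁻¹ * G) := by
      rw [add_mul, mul_nonsing_inv_cancel_left _ _ hA.det_pos.ne'.isUnit, Matrix.mul_assoc]
    rw [inv_sub_inv (by simp [hA.isUnit, hB.isUnit]), add_sub_cancel_left, hGA,
      nonsing_inv_mul_cancel_left _ _ hB.det_pos.ne'.isUnit, Matrix.mul_assoc]
  have hGAG : (G * A⁻¹ * G).PosSemidef := by
    simpa [hG.transpose_eq_self] using hA.inv.posSemidef.conjTranspose_mul_mul_same G
  rw [hdecomp]
  simpa [hB.inv.posSemidef.transpose_eq_self] using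
    (hG.add hGAG).mul_mul_transpose_same (A + G)⁻¹

lemma PosDef.two_mul_dotProduct_sub_le {S : Matrix n n ℝ} (hS : S.PosDef) (r e : n → ℝ) :
    2 * (r ⬝ᵥ e) - r ⬝ᵥ S *ᵥ r ≤ e ⬝ᵥ S⁻¹ *ᵥ e := by
  have h := hS.inv.posSemidef.dotProduct_mulVec_nonneg (e - S *ᵥ r)
  rw [star_trivial, dotProduct_mulVec_sub_sub hS.inv.posSemidef.transpose_eq_self, mulVec_mulVec,
    nonsing_inv_mul _ hS.det_pos.ne'.isUnit, one_mulVec, dotProduct_comm e r,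
    dotProduct_comm (S *ᵥ r) r] at h
  linarith

lemma PosDef.dotProduct_inv_mulVec_sub_inv_add_mulVec {Sig G : Matrix n n ℝ} (hSig : Sig.PosDef)
    (hG : G.PosSemidef) {M δ : n → ℝ} (hM : G *ᵥ M = δ) (v : n → ℝ) :
    v ⬝ᵥ Sig⁻¹ *ᵥ v - (v - δ) ⬝ᵥ (Sig + G)⁻¹ *ᵥ (v - δ)
      = (v + Sig *ᵥ M) ⬝ᵥ (Sig⁻¹ - (Sig + G)⁻¹) *ᵥ (v + Sig *ᵥ M) - M ⬝ᵥ δ := by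
  have hSigt : (Sig + G).PosDef := hSig.add_posSemidef hG
  have hA : (Sig⁻¹ - (Sig + G)⁻¹)ᵀ = Sig⁻¹ - (Sig + G)⁻¹ := by
    rw [transpose_sub, hSig.inv.posSemidef.transpose_eq_self,
      hSigt.inv.posSemidef.transpose_eq_self]
  have hAw : (Sig⁻¹ - (Sig + G)⁻¹) *ᵥ (Sig *ᵥ M) = (Sig + G)⁻¹ *ᵥ δ := by
    have hASig : (Sig⁻¹ - (Sig + G)⁻¹) * Sig = (Sig + G)⁻¹ * G := by
      calc _ = (Sig + G)⁻¹ * (Sig + G) - (Sig + G)⁻¹ * Sig := by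
            rw [sub_mul, nonsing_inv_mul _ hSig.det_pos.ne'.isUnit,
              nonsing_inv_mul _ hSigt.det_pos.ne'.isUnit]
        _ = (Sig + G)⁻¹ * G := by rw [← Matrix.mul_sub, add_sub_cancel_left]
    rw [mulVec_mulVec, hASig, ← mulVec_mulVec, hM]
  have hwδ : (Sig *ᵥ M) ⬝ᵥ (Sig + G)⁻¹ *ᵥ δ + δ ⬝ᵥ (Sig + G)⁻¹ *ᵥ δ = M ⬝ᵥ δ := by
    rw [← add_dotProduct, ← hM, ← add_mulVec, ← dotProduct_transpose_mulVec,
      hSigt.inv.posSemidef.transpose_eq_self, mulVec_mulVec,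
      nonsing_inv_mul _ hSigt.det_pos.ne'.isUnit, one_mulVec, dotProduct_comm]
  rw [dotProduct_mulVec_add_add hA,
    dotProduct_mulVec_sub_sub hSigt.inv.posSemidef.transpose_eq_self, hAw]
  simp only [sub_mulVec, dotProduct_sub]
  linarith

lemma PosDef.exists_dotProduct_inv_sub_inv_add_mulVec_le {Sig : Matrix n n ℝ} {S : Matrix p p ℝ}
    (hSig : Sig.PosDef) (hS : S.PosDef) (D : Matrix n p ℝ) (e : p → ℝ) :
    ∃ w : n → ℝ, ∀ v : n → ℝ,
      (v + w) ⬝ᵥ (Sig⁻¹ - (Sig + D * S * Dᵀ)⁻¹) *ᵥ (v + w) ≤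
        v ⬝ᵥ Sig⁻¹ *ᵥ v - (v - D *ᵥ e) ⬝ᵥ (Sig + D * S * Dᵀ)⁻¹ *ᵥ (v - D *ᵥ e)
          + e ⬝ᵥ S⁻¹ *ᵥ e := by
  obtain ⟨M, hM⟩ : D *ᵥ e ∈ (D * S * Dᵀ).mulVecLin.range := by
    rw [hS.range_mulVecLin_mul_mul_transpose]
    exact ⟨e, rfl⟩
  have hMDe : M ⬝ᵥ D *ᵥ e ≤ e ⬝ᵥ S⁻¹ *ᵥ e := by
    have hMD : M ⬝ᵥ D *ᵥ e = (Dᵀ *ᵥ M) ⬝ᵥ e := by rw [dotProduct_mulVec, mulVec_transpose]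
    have hr : (Dᵀ *ᵥ M) ⬝ᵥ S *ᵥ (Dᵀ *ᵥ M) = (Dᵀ *ᵥ M) ⬝ᵥ e := by
      rw [← dotProduct_mul_mul_transpose_mulVec, ← mulVecLin_apply, hM, hMD]
    linarith [hS.two_mul_dotProduct_sub_le (Dᵀ *ᵥ M) e]
  refine ⟨Sig *ᵥ M, fun v => ?_⟩
  rw [hSig.dotProduct_inv_mulVec_sub_inv_add_mulVec (hS.posSemidef.mul_mul_transpose_same D) hM v]
  linarith

end Matrix

namespace Kalman

variable {n p : Type*} [Fintype n] [Fintype p]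

lemma joseph_form_eq {α : Type*} [CommRing α] [DecidableEq n] {H : Matrix p n α}
    {Q : Matrix n n α} {R S : Matrix p p α} {K : Matrix n p α} (hQ : Qᵀ = Q) (hR : Rᵀ = R)
    (hS : S = H * Q * Hᵀ + R) (hKS : K * S = Q * Hᵀ) (L : Matrix n p α) :
    (1 - L * H) * Q * (1 - L * H)ᵀ + L * R * Lᵀ = Q - K * S * Kᵀ + (L - K) * S * (L - K)ᵀ := by
  have hSsymm : Sᵀ = S := by
    rw [hS, transpose_add, transpose_mul, transpose_mul, transpose_transpose, hQ, hR,
      Matrix.mul_assoc]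
  have hHQ : H * Q = S * Kᵀ := by
    simpa only [transpose_mul, transpose_transpose, hQ, hSsymm] using (congrArg transpose hKS).symm
  calc _ = Q - L * (H * Q) - Q * Hᵀ * Lᵀ + L * S * Lᵀ := by
        simp only [hS, transpose_sub, transpose_one, transpose_mul, Matrix.mul_add, Matrix.add_mul,
          Matrix.mul_sub, Matrix.sub_mul, Matrix.mul_one, Matrix.one_mul, Matrix.mul_assoc]
        abel
    _ = Q - L * (S * Kᵀ) - K * S * Lᵀ + L * S * Lᵀ := by rw [hHQ, hKS]
    _ = _ := by
        simp only [transpose_sub, Matrix.mul_sub, Matrix.sub_mul, Matrix.mul_assoc]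
        abel

variable {H : Matrix p n ℝ} {Q : Matrix n n ℝ} {R S : Matrix p p ℝ} {K : Matrix n p ℝ}

lemma posDef_mul_mul_transpose_add (hQ : Q.PosSemidef) (hR : R.PosDef) (H : Matrix p n ℝ) :
    (H * Q * Hᵀ + R).PosDef :=
  hR.posSemidef_add (hQ.mul_mul_transpose_same H)

variable [DecidableEq p]

lemma gain_mul (hQ : Q.PosDef) (hR : R.PosDef) (hS : S = H * Q * Hᵀ + R)
    (hK : K = Q * Hᵀ * S⁻¹) : K * S = Q * Hᵀ := by
  have hSpd : S.PosDef := hS ▸ posDef_mul_mul_transpose_add hQ.posSemidef hR H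
  rw [hK, nonsing_inv_mul_cancel_right _ _ hSpd.det_pos.ne'.isUnit]

lemma gain_transpose_mul_transpose (hQ : Q.PosDef) (hR : R.PosDef) (hS : S = H * Q * Hᵀ + R)
    (hK : K = Q * Hᵀ * S⁻¹) : Kᵀ * Hᵀ = 1 - S⁻¹ * R := by
  have hSpd : S.PosDef := hS ▸ posDef_mul_mul_transpose_add hQ.posSemidef hR H
  rw [hK, transpose_mul, transpose_mul, transpose_nonsing_inv, hSpd.posSemidef.transpose_eq_self,
    transpose_transpose, hQ.posSemidef.transpose_eq_self, Matrix.mul_assoc, Matrix.mul_assoc,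
    ← Matrix.mul_assoc H, show H * Q * Hᵀ = S - R by rw [hS]; abel, Matrix.mul_sub,
    nonsing_inv_mul _ hSpd.det_pos.ne'.isUnit]

variable [DecidableEq n]

lemma joseph_form_eq_add (hQ : Q.PosDef) (hR : R.PosDef) (hS : S = H * Q * Hᵀ + R)
    (hK : K = Q * Hᵀ * S⁻¹) (L : Matrix n p ℝ) :
    (1 - L * H) * Q * (1 - L * H)ᵀ + L * R * Lᵀ
      = (1 - K * H) * Q * (1 - K * H)ᵀ + K * R * Kᵀ + (L - K) * S * (L - K)ᵀ := by
  have hJ := joseph_form_eq hQ.posSemidef.transpose_eq_self hR.posSemidef.transpose_eq_self hS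
    (gain_mul hQ hR hS hK)
  rw [hJ, hJ, sub_self, Matrix.zero_mul, Matrix.zero_mul, add_zero]

lemma posDef_inv_add_transpose_mul_inv_mul (hQ : Q.PosDef) (hR : R.PosDef) :
    (Q⁻¹ + Hᵀ * R⁻¹ * H).PosDef :=
  hQ.inv.add_posSemidef (by simpa using hR.inv.posSemidef.conjTranspose_mul_mul_same H)

lemma joseph_form_gain_eq_inv (hQ : Q.PosDef) (hR : R.PosDef) (hS : S = H * Q * Hᵀ + R)
    (hK : K = Q * Hᵀ * S⁻¹) :
    (1 - K * H) * Q * (1 - K * H)ᵀ + K * R * Kᵀ = (Q⁻¹ + Hᵀ * R⁻¹ * H)⁻¹ := by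
  have hSpd : S.PosDef := hS ▸ posDef_mul_mul_transpose_add hQ.posSemidef hR H
  have hHQ : S * Kᵀ = H * Q := by
    rw [hK, transpose_mul, transpose_mul, transpose_nonsing_inv, hSpd.posSemidef.transpose_eq_self,
      transpose_transpose, hQ.posSemidef.transpose_eq_self,
      mul_nonsing_inv_cancel_left _ _ hSpd.det_pos.ne'.isUnit]
  have hQQ := nonsing_inv_nonsing_inv _ hQ.det_pos.ne'.isUnit
  have hRR := nonsing_inv_nonsing_inv _ hR.det_pos.ne'.isUnit
  rw [joseph_form_eq hQ.posSemidef.transpose_eq_self hR.posSemidef.transpose_eq_self hS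
      (gain_mul hQ hR hS hK), sub_self, Matrix.zero_mul, Matrix.zero_mul, add_zero,
    add_mul_mul_inv_eq_sub _ _ _ _ hQ.inv.isUnit hR.inv.isUnit
      (by rw [hQQ, hRR, add_comm, ← hS]; exact hSpd.isUnit),
    hQQ, hRR, add_comm R, ← hS, Matrix.mul_assoc K, hHQ, hK]
  simp only [Matrix.mul_assoc]

lemma information_mul_gain (hQ : Q.PosDef) (hR : R.PosDef) (hS : S = H * Q * Hᵀ + R)
    (hK : K = Q * Hᵀ * S⁻¹) : (Q⁻¹ + Hᵀ * R⁻¹ * H) * K = Hᵀ * R⁻¹ := by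
  have hQH : (Q⁻¹ + Hᵀ * R⁻¹ * H) * (Q * Hᵀ) = Hᵀ * R⁻¹ * S := by
    rw [hS, Matrix.add_mul, nonsing_inv_mul_cancel_left _ _ hQ.det_pos.ne'.isUnit, Matrix.mul_add,
      nonsing_inv_mul_cancel_right _ _ hR.det_pos.ne'.isUnit]
    simp only [Matrix.mul_assoc]
    abel
  have hSpd : S.PosDef := hS ▸ posDef_mul_mul_transpose_add hQ.posSemidef hR H
  rw [hK, ← Matrix.mul_assoc, hQH, mul_nonsing_inv_cancel_right _ _ hSpd.det_pos.ne'.isUnit]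

lemma complete_square (hQ : Q.PosDef) (hR : R.PosDef) (hS : S = H * Q * Hᵀ + R)
    (hK : K = Q * Hᵀ * S⁻¹) (e : p → ℝ) (v : n → ℝ) :
    (e - H *ᵥ v) ⬝ᵥ R⁻¹ *ᵥ (e - H *ᵥ v) + v ⬝ᵥ Q⁻¹ *ᵥ v
      = (v - K *ᵥ e) ⬝ᵥ (Q⁻¹ + Hᵀ * R⁻¹ * H) *ᵥ (v - K *ᵥ e) + e ⬝ᵥ S⁻¹ *ᵥ e := by
  have hRinv := hR.inv.posSemidef.transpose_eq_self
  have hquad : v ⬝ᵥ (Q⁻¹ + Hᵀ * R⁻¹ * H) *ᵥ v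
      = v ⬝ᵥ Q⁻¹ *ᵥ v + (H *ᵥ v) ⬝ᵥ R⁻¹ *ᵥ (H *ᵥ v) := by
    rw [add_mulVec, dotProduct_add, mulVec_dotProduct, mulVec_mulVec, mulVec_mulVec]
  have hcross : v ⬝ᵥ (Q⁻¹ + Hᵀ * R⁻¹ * H) *ᵥ (K *ᵥ e) = e ⬝ᵥ R⁻¹ *ᵥ (H *ᵥ v) := by
    rw [mulVec_mulVec, information_mul_gain hQ hR hS hK, ← mulVec_mulVec,
      dotProduct_mulVec_comm hRinv e, mulVec_dotProduct]
  have hgain : (K *ᵥ e) ⬝ᵥ (Q⁻¹ + Hᵀ * R⁻¹ * H) *ᵥ (K *ᵥ e)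
      = e ⬝ᵥ R⁻¹ *ᵥ e - e ⬝ᵥ S⁻¹ *ᵥ e := by
    rw [mulVec_mulVec, information_mul_gain hQ hR hS hK, mulVec_dotProduct, mulVec_mulVec,
      ← Matrix.mul_assoc, gain_transpose_mul_transpose hQ hR hS hK, Matrix.sub_mul,
      Matrix.one_mul, Matrix.mul_assoc, mul_nonsing_inv _ hR.det_pos.ne'.isUnit, Matrix.mul_one,
      sub_mulVec, dotProduct_sub]
  have hP := (posDef_inv_add_transpose_mul_inv_mul (H := H) hQ hR).posSemidef.transpose_eq_self
  rw [dotProduct_mulVec_sub_sub hRinv, dotProduct_mulVec_sub_sub hP, hquad, hcross, hgain]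
  ring

end Kalman

lemma gaussDensity_div_gaussDensity {d : ℕ} {C C' : Matrix (Fin d) (Fin d) ℝ} (hC : 0 < C.det)
    (hC' : 0 < C'.det) (μ μ' x : Fin d → ℝ) :
    gaussDensity μ C x / gaussDensity μ' C' x =
      (C'.det / C.det) ^ ((1 : ℝ) / 2) *
        Real.exp (-(1 / 2) * ((x - μ) ⬝ᵥ C⁻¹ *ᵥ (x - μ) - (x - μ') ⬝ᵥ C'⁻¹ *ᵥ (x - μ'))) := by
  simp only [gaussDensity]
  rw [show -(1 : ℝ) / 2 = -(1 / 2) by ring, Real.rpow_neg hC.le, Real.rpow_neg hC'.le,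
    Real.div_rpow hC'.le hC.le, mul_sub, Real.exp_sub]
  have hπ : 0 < (2 * Real.pi) ^ (-(d : ℝ) / 2) := by positivity
  have hCh : 0 < C.det ^ ((1 : ℝ) / 2) := by positivity
  have hC'h : 0 < C'.det ^ ((1 : ℝ) / 2) := by positivity
  field_simp

theorem target_proposal_ratio_bound_general
    {d m : ℕ}
    (H : Matrix (Fin m) (Fin d) ℝ)
    (Q : Matrix (Fin d) (Fin d) ℝ) (R : Matrix (Fin m) (Fin m) ℝ)
    (hQ : Q.PosDef) (hR : R.PosDef)
    (S : Matrix (Fin m) (Fin m) ℝ)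
    (hS : S = H * Q * Hᵀ + R)
    (K Kt : Matrix (Fin d) (Fin m) ℝ)
    (hK : K = Q * Hᵀ * S⁻¹)
    (Sig Sigt : Matrix (Fin d) (Fin d) ℝ)
    (hSig : Sig = (1 - K * H) * Q * (1 - K * H)ᵀ + K * R * Kᵀ)
    (hSigt : Sigt = (1 - Kt * H) * Q * (1 - Kt * H)ᵀ + Kt * R * Ktᵀ)
    (z : Fin d → ℝ) (y : Fin m → ℝ)
    (ptar qprop : (Fin d → ℝ) → ℝ)
    (hptar : ∀ x, ptar x =
      Real.exp (-(1 / 2) * ((y - H.mulVec x) ⬝ᵥ R⁻¹.mulVec (y - H.mulVec x)))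
        * gaussDensity z Q x)
    (hqprop : ∀ x, qprop x = gaussDensity (z + Kt.mulVec (y - H.mulVec z)) Sigt x) :
    (Sig⁻¹ - Sigt⁻¹).PosSemidef ∧
    ∃ u : Fin d → ℝ, ∀ x, ptar x / qprop x ≤
      (Sigt.det / Q.det) ^ ((1 : ℝ) / 2) *
        Real.exp (-(1 / 2) * ((x - u) ⬝ᵥ (Sig⁻¹ - Sigt⁻¹).mulVec (x - u))) := by
  have hSpd : S.PosDef := hS ▸ Kalman.posDef_mul_mul_transpose_add hQ.posSemidef hR H
  have hinfo := Kalman.posDef_inv_add_transpose_mul_inv_mul (H := H) hQ hR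
  have hSigeq : Sig = (Q⁻¹ + Hᵀ * R⁻¹ * H)⁻¹ :=
    hSig ▸ Kalman.joseph_form_gain_eq_inv hQ hR hS hK
  have hSigpd : Sig.PosDef := hSigeq ▸ hinfo.inv
  have hSiginv : Sig⁻¹ = Q⁻¹ + Hᵀ * R⁻¹ * H := by
    rw [hSigeq, nonsing_inv_nonsing_inv _ hinfo.det_pos.ne'.isUnit]
  have hSigt' : Sigt = Sig + (Kt - K) * S * (Kt - K)ᵀ := by
    rw [hSigt, hSig, Kalman.joseph_form_eq_add hQ hR hS hK]
  have hG := hSpd.posSemidef.mul_mul_transpose_same (Kt - K)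
  have hSigtpd : Sigt.PosDef := hSigt' ▸ hSigpd.add_posSemidef hG
  set e := y - H *ᵥ z with he
  obtain ⟨w, hw⟩ := hSigpd.exists_dotProduct_inv_sub_inv_add_mulVec_le hSpd (Kt - K) e
  refine ⟨hSigt' ▸ hSigpd.inv_sub_inv_add_posSemidef hG, z + K *ᵥ e - w, fun x => ?_⟩
  rw [hptar, hqprop, mul_div_assoc, gaussDensity_div_gaussDensity hQ.det_pos hSigtpd.det_pos,
    mul_left_comm, ← Real.exp_add]
  refine mul_le_mul_of_nonneg_left (Real.exp_le_exp.mpr ?_)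
    (Real.rpow_nonneg (div_pos hSigtpd.det_pos hQ.det_pos).le _)
  have hcs := Kalman.complete_square hQ hR hS hK e (x - z)
  have hv := hw (x - (z + K *ᵥ e))
  rw [← hSiginv, show e - H *ᵥ (x - z) = y - H *ᵥ x by rw [he, mulVec_sub]; abel,
    show x - z - K *ᵥ e = x - (z + K *ᵥ e) by abel] at hcs
  rw [← hSigt',
    show x - (z + K *ᵥ e) - (Kt - K) *ᵥ e = x - (z + Kt *ᵥ e) by rw [sub_mulVec]; abel,
    show x - (z + K *ᵥ e) + w = x - (z + K *ᵥ e - w) by abel] at hv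
  linarith

/-- Bound on the target–proposal ratio: with the EnKF
matrices as in the context, the unnormalized target
`p(x) = exp(−½|y − Hx|²_R)·𝒩(z,Q)(x)` and the proposal
`q(x) = 𝒩(z + K_t(y − Hz), Σ_t)(x)` satisfy: `Σ⁻¹ − Σ_t⁻¹` is symmetric
positive semidefinite and there exists `u` such that for all `x`,
`p(x)/q(x) ≤ (det Σ_t/det Q)^{1/2}·exp(−½ (x−u)ᵀ(Σ⁻¹ − Σ_t⁻¹)(x−u))`. -/
theorem target_proposal_ratio_bound
    {d m : ℕ} (hd : 1 ≤ d) (hm : 1 ≤ m)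
    (H : Matrix (Fin m) (Fin d) ℝ)
    (Q Qt : Matrix (Fin d) (Fin d) ℝ) (R : Matrix (Fin m) (Fin m) ℝ)
    (hQ : Q.PosDef) (hQt : Qt.PosDef) (hR : R.PosDef)
    (hQtQ : (Qt - Q).PosSemidef)
    (S St : Matrix (Fin m) (Fin m) ℝ)
    (hS : S = H * Q * Hᵀ + R) (hSt : St = H * Qt * Hᵀ + R)
    (K Kt : Matrix (Fin d) (Fin m) ℝ)
    (hK : K = Q * Hᵀ * S⁻¹) (hKt : Kt = Qt * Hᵀ * St⁻¹)
    (Sig Sigt : Matrix (Fin d) (Fin d) ℝ)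
    (hSig : Sig = (1 - K * H) * Q * (1 - K * H)ᵀ + K * R * Kᵀ)
    (hSigt : Sigt = (1 - Kt * H) * Q * (1 - Kt * H)ᵀ + Kt * R * Ktᵀ)
    (z : Fin d → ℝ) (y : Fin m → ℝ)
    (ptar qprop : (Fin d → ℝ) → ℝ)
    (hptar : ∀ x, ptar x =
      Real.exp (-(1 / 2) * ((y - H.mulVec x) ⬝ᵥ R⁻¹.mulVec (y - H.mulVec x)))
        * gaussDensity z Q x)
    (hqprop : ∀ x, qprop x = gaussDensity (z + Kt.mulVec (y - H.mulVec z)) Sigt x) :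
    (Sig⁻¹ - Sigt⁻¹).PosSemidef ∧
    ∃ u : Fin d → ℝ, ∀ x, ptar x / qprop x ≤
      (Sigt.det / Q.det) ^ ((1 : ℝ) / 2) *
        Real.exp (-(1 / 2) * ((x - u) ⬝ᵥ (Sig⁻¹ - Sigt⁻¹).mulVec (x - u))) :=
  target_proposal_ratio_bound_general H Q R hQ hR S hS K Kt hK Sig Sigt hSig hSigt z y ptar qprop
    hptar hqprop
end

section
/- Difference of quadratic forms: let A, B ∈ ℝ^{d×d} be symmetric positive definite, let a, b, v ∈ ℝ^d satisfy (B − A)·v = b − a, and set u := b − B·v. Then for all x ∈ ℝ^d: (x − a)^⊤·A^{-1}·(x − a) − (x − b)^⊤·B^{-1}·(x − b) = (x − u)^⊤·(A^{-1} − B^{-1})·(x − u) − v^⊤·(B − A)·v. (The term v^⊤·(B − A)·v equals (b − a)^⊤·(B − A)^†·(b − a) for the Moore–Penrose pseudoinverse (B − A)^†, since b − a lies in the range of B − A.) -/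
open Matrix

lemma quad_expand {d : ℕ} (M : Matrix (Fin d) (Fin d) ℝ) (hM : M.PosDef)
    (y v : Fin d → ℝ) :
    (y - M.mulVec v) ⬝ᵥ M⁻¹.mulVec (y - M.mulVec v)
      = y ⬝ᵥ M⁻¹.mulVec y - 2 * (v ⬝ᵥ y) + v ⬝ᵥ M.mulVec v := by
  have hinv : M⁻¹.mulVec (M.mulVec v) = v := by
    rw [Matrix.mulVec_mulVec, Matrix.nonsing_inv_mul _ (isUnit_iff_ne_zero.mpr hM.det_pos.ne'),
      Matrix.one_mulVec]
  have hsm : Mᵀ = M := by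
    have := hM.isHermitian.eq
    simpa using this
  have hsymm : M⁻¹ᵀ = M⁻¹ := by
    rw [Matrix.transpose_nonsing_inv, hsm]
  have hswap : (M.mulVec v) ⬝ᵥ M⁻¹.mulVec y = v ⬝ᵥ y := by
    rw [Matrix.dotProduct_mulVec, Matrix.vecMul_mulVec]
    rw [hsm, Matrix.mul_nonsing_inv _ (isUnit_iff_ne_zero.mpr hM.det_pos.ne'),
      Matrix.vecMul_one]
  rw [Matrix.mulVec_sub, sub_dotProduct, dotProduct_sub,
    dotProduct_sub, hinv, hswap]
  rw [dotProduct_comm y v, dotProduct_comm (M.mulVec v) v]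
  ring

/-- Difference of quadratic forms: for symmetric positive
definite `A, B` and vectors `a, b, v` with `(B − A)·v = b − a`, setting
`u = b − B·v`, for all `x`:
`(x−a)ᵀA⁻¹(x−a) − (x−b)ᵀB⁻¹(x−b) = (x−u)ᵀ(A⁻¹−B⁻¹)(x−u) − vᵀ(B−A)v`. -/
theorem quadratic_form_difference
    {d : ℕ}
    (A B : Matrix (Fin d) (Fin d) ℝ) (hA : A.PosDef) (hB : B.PosDef)
    (a b v : Fin d → ℝ) (hv : (B - A).mulVec v = b - a)
    (u : Fin d → ℝ) (hu : u = b - B.mulVec v) :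
    ∀ x : Fin d → ℝ,
      (x - a) ⬝ᵥ A⁻¹.mulVec (x - a) - (x - b) ⬝ᵥ B⁻¹.mulVec (x - b)
        = (x - u) ⬝ᵥ (A⁻¹ - B⁻¹).mulVec (x - u) - v ⬝ᵥ (B - A).mulVec v := by
  intro x
  have ha : x - a = (x - u) - A.mulVec v := by
    rw [hu]
    have : a = b - (B - A).mulVec v := by rw [hv]; abel
    rw [this, Matrix.sub_mulVec]
    abel
  have hb : x - b = (x - u) - B.mulVec v := by rw [hu]; abel
  rw [ha, hb, quad_expand A hA _ v, quad_expand B hB _ v]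
  simp only [Matrix.sub_mulVec, dotProduct_sub]
  ring
end
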